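/- arXiv:2206.05917 — 14 statements merged into one kernel-verified Lean document; each statement's English description precedes it below -/
import Mathlib

section
/- Let X and Y be finite nonempty sets and let E : X → Y → Prop be a bipartite relation (a bigraph). Then E admits an interval bigraph representation if and only if E is zero-partitionable, i.e., there exist linear orders on X and on Y and a two-coloring c (with colors R and C) of all pairs (x,y) with ¬E x y, such that every R-colored zero has only R-colored zeros to its right (for all y' > y, ¬E x y' and c(x,y') = R) and every C-colored zero has only C-colored zeros below it (for all x' > x, ¬E x' y and c(x',y) = C). -/
/-- An interval bigraph representation of a bipartite relation `E` between `X` and `Y`: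
each element of `X ⊕ Y` gets a closed interval `[l v, r v]` (so `l v ≤ r v`), and
`E x y` holds iff the intervals of `x` and `y` intersect. -/
def IntervalBigraphRep {X Y : Type*} (E : X → Y → Prop) : Prop :=
  ∃ l r : X ⊕ Y → ℝ, (∀ v, l v ≤ r v) ∧
    ∀ x y, E x y ↔ (l (Sum.inl x) ≤ r (Sum.inr y) ∧ l (Sum.inr y) ≤ r (Sum.inl x))

/-- `E` is zero-partitionable: there are linear orders on `X` and `Y` and a two-coloring
(`true` = R, `false` = C) of the zeros of the biadjacency matrix such that every R-colored
zero has only R-colored zeros to its right, and every C-colored zero has only C-colored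
zeros below it. -/
def ZeroPartitionable {X Y : Type*} (E : X → Y → Prop) : Prop :=
  ∃ (lX : LinearOrder X) (lY : LinearOrder Y) (c : X → Y → Bool),
    ∀ x y, ¬ E x y →
      ((c x y = true → ∀ y', lY.lt y y' → ¬ E x y' ∧ c x y' = true) ∧
       (c x y = false → ∀ x', lX.lt x x' → ¬ E x' y ∧ c x' y = false))

/-- Any real-valued function on a finite type admits a linear order along which it is
antitone. -/
lemma exists_linearOrder_antitone_aux {α : Type*} [Fintype α] (f : α → ℝ) :
    ∃ L : LinearOrder α, ∀ a b, L.lt a b → f b ≤ f a := by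
  classical
  let e := Fintype.equivFin α
  refine ⟨LinearOrder.lift' (fun a => toLex (-f a, e a))
    (fun a b h => e.injective (congrArg (fun p => (ofLex p).2) h)), fun a b h => ?_⟩
  have h' : toLex (-f a, e a) < toLex (-f b, e b) := h
  rcases (Prod.Lex.lt_iff).mp h' with h1 | ⟨h1, _⟩
  · simp only [ofLex_toLex] at h1; linarith
  · simp only [ofLex_toLex] at h1; linarith [le_of_eq h1]

theorem interval_bigraph_iff_zero_partitionable
    {X Y : Type*} [Fintype X] [Fintype Y] [Nonempty X] [Nonempty Y]
    (E : X → Y → Prop) :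
    IntervalBigraphRep E ↔ ZeroPartitionable E := by
  classical
  constructor
  · rintro ⟨l, r, hlr, hE⟩
    obtain ⟨LX, hLX⟩ := exists_linearOrder_antitone_aux (fun x : X => r (Sum.inl x))
    obtain ⟨LY, hLY⟩ := exists_linearOrder_antitone_aux (fun y : Y => r (Sum.inr y))
    refine ⟨LX, LY, fun x y => decide (r (Sum.inr y) < l (Sum.inl x)), fun x y hxy => ?_⟩
    have hzero : r (Sum.inr y) < l (Sum.inl x) ∨ r (Sum.inl x) < l (Sum.inr y) := by
      by_contra hco
      push_neg at hco
      exact hxy ((hE x y).mpr ⟨hco.1, hco.2⟩)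
    constructor
    · intro hcv y' hy'
      have h1 : r (Sum.inr y) < l (Sum.inl x) := of_decide_eq_true hcv
      have h2 : r (Sum.inr y') ≤ r (Sum.inr y) := hLY y y' hy'
      refine ⟨fun hE' => absurd ((hE x y').mp hE').1 (by linarith),
        decide_eq_true (by linarith)⟩
    · intro hcv x' hx'
      have h1 : ¬ (r (Sum.inr y) < l (Sum.inl x)) := of_decide_eq_false hcv
      push_neg at h1
      have h3 : r (Sum.inl x) < l (Sum.inr y) := by
        rcases hzero with hz | hz
        · linarith
        · exact hz
      have h2 : r (Sum.inl x') ≤ r (Sum.inl x) := hLX x x' hx'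
      refine ⟨fun hE' => absurd ((hE x' y).mp hE').2 (by linarith),
        decide_eq_false (by push_neg; linarith [hlr (Sum.inl x'), hlr (Sum.inr y)])⟩
  · rintro ⟨LX, LY, c, hc⟩
    letI := LX
    letI := LY
    set n := Fintype.card X with hn
    set m := Fintype.card Y with hm
    set σ : X → ℕ := fun x => (Finset.univ.filter (fun x' => x' < x)).card with hσ
    set ρ : Y → ℕ := fun y => (Finset.univ.filter (fun y' => y' < y)).card with hρ
    set f : X → ℕ :=
      fun x => (Finset.univ.filter (fun y => ¬(¬ E x y ∧ c x y = true))).card with hf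
    set g : Y → ℕ :=
      fun y => (Finset.univ.filter (fun x => ¬(¬ E x y ∧ c x y = false))).card with hg
    -- basic bounds
    have hσn : ∀ x, σ x ≤ n := fun x => Finset.card_filter_le _ _
    have hρm : ∀ y, ρ y ≤ m := fun y => Finset.card_filter_le _ _
    have hfm : ∀ x, f x ≤ m := fun x => Finset.card_filter_le _ _
    have hgn : ∀ y, g y ≤ n := fun y => Finset.card_filter_le _ _
    -- characterization of R-zeros and C-zeros
    have hR : ∀ x y, (¬ E x y ∧ c x y = true) ↔ f x ≤ ρ y := by
      intro x y
      constructor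
      · intro hP
        apply Finset.card_le_card
        intro y' hy'
        simp only [Finset.mem_filter, Finset.mem_univ, true_and] at hy' ⊢
        by_contra hlt
        rcases (le_of_not_gt hlt).eq_or_lt with he | hl
        · exact hy' (he ▸ hP)
        · exact hy' ((hc x y hP.1).1 hP.2 y' hl)
      · intro hle
        by_contra hP
        have hsub : Finset.univ.filter (fun y' => y' < y) ⊂
            Finset.univ.filter (fun y' => ¬(¬ E x y' ∧ c x y' = true)) := by
          constructor
          · intro y' hy'
            simp only [Finset.mem_filter, Finset.mem_univ, true_and] at hy' ⊢
            intro hP'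
            exact hP ((hc x y' hP'.1).1 hP'.2 y hy')
          · intro hsub'
            have hy : y ∈ Finset.univ.filter (fun y' => ¬(¬ E x y' ∧ c x y' = true)) := by
              simp only [Finset.mem_filter, Finset.mem_univ, true_and]; exact hP
            have := hsub' hy
            simp only [Finset.mem_filter, Finset.mem_univ, true_and] at this
            exact lt_irrefl y this
        exact absurd hle (not_le.mpr (Finset.card_lt_card hsub))
    have hC : ∀ x y, (¬ E x y ∧ c x y = false) ↔ g y ≤ σ x := by
      intro x y
      constructor
      · intro hP
        apply Finset.card_le_card
        intro x' hx'
        simp only [Finset.mem_filter, Finset.mem_univ, true_and] at hx' ⊢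
        by_contra hlt
        rcases (le_of_not_gt hlt).eq_or_lt with he | hl
        · exact hx' (he ▸ hP)
        · exact hx' ((hc x y hP.1).2 hP.2 x' hl)
      · intro hle
        by_contra hP
        have hsub : Finset.univ.filter (fun x' => x' < x) ⊂
            Finset.univ.filter (fun x' => ¬(¬ E x' y ∧ c x' y = false)) := by
          constructor
          · intro x' hx'
            simp only [Finset.mem_filter, Finset.mem_univ, true_and] at hx' ⊢
            intro hP'
            exact hP ((hc x' y hP'.1).2 hP'.2 x hx')
          · intro hsub'
            have hx : x ∈ Finset.univ.filter (fun x' => ¬(¬ E x' y ∧ c x' y = false)) := by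
              simp only [Finset.mem_filter, Finset.mem_univ, true_and]; exact hP
            have := hsub' hx
            simp only [Finset.mem_filter, Finset.mem_univ, true_and] at this
            exact lt_irrefl x this
        exact absurd hle (not_le.mpr (Finset.card_lt_card hsub))
    have hE2 : ∀ x y, E x y ↔ (ρ y < f x ∧ σ x < g y) := by
      intro x y
      constructor
      · intro hExy
        constructor
        · by_contra hlt
          exact ((hR x y).mpr (le_of_not_gt hlt)).1 hExy
        · by_contra hlt
          exact ((hC x y).mpr (le_of_not_gt hlt)).1 hExy
      · rintro ⟨h1, h2⟩
        by_contra hne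
        cases hcv : c x y with
        | true => exact absurd ((hR x y).mp ⟨hne, hcv⟩) (not_le.mpr h1)
        | false => exact absurd ((hC x y).mp ⟨hne, hcv⟩) (not_le.mpr h2)
    -- merging the row scale and the column scale
    set needA : ℕ → ℕ → Prop := fun i j => ∃ x, i ≤ σ x ∧ f x ≤ j with hneedA
    have monoI : ∀ {i i' j}, i ≤ i' → needA i' j → needA i j :=
      fun hii ⟨x, h1, h2⟩ => ⟨x, le_trans hii h1, h2⟩
    have monoJ : ∀ {i j j'}, j ≤ j' → needA i j → needA i j' :=
      fun hjj ⟨x, h1, h2⟩ => ⟨x, h1, le_trans h2 hjj⟩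
    set α : ℕ → ℕ :=
      fun i => i + ((Finset.range (m+1)).filter (fun j => ¬ needA i j)).card with hα
    set β : ℕ → ℕ :=
      fun j => j + ((Finset.range (n+1)).filter (fun i => needA i j)).card with hβ
    have hαmono : StrictMono α := by
      intro i i' hii
      have hcard : ((Finset.range (m+1)).filter (fun j => ¬ needA i j)).card ≤
          ((Finset.range (m+1)).filter (fun j => ¬ needA i' j)).card := by
        apply Finset.card_le_card
        intro j hj
        simp only [Finset.mem_filter] at hj ⊢
        exact ⟨hj.1, fun hcontra => hj.2 (monoI hii.le hcontra)⟩
      simp only [hα]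
      omega
    have hβmono : StrictMono β := by
      intro j j' hjj
      have hcard : ((Finset.range (n+1)).filter (fun i => needA i j)).card ≤
          ((Finset.range (n+1)).filter (fun i => needA i j')).card := by
        apply Finset.card_le_card
        intro i hi
        simp only [Finset.mem_filter] at hi ⊢
        exact ⟨hi.1, monoJ hjj.le hi.2⟩
      simp only [hβ]
      omega
    have key1 : ∀ i j, i ≤ n → j ≤ m → needA i j → α i < β j := by
      intro i j hin hjm hneed
      have hS : ((Finset.range (m+1)).filter (fun j' => ¬ needA i j')).card ≤ j := by
        calc ((Finset.range (m+1)).filter (fun j' => ¬ needA i j')).card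
            ≤ (Finset.range j).card := by
              apply Finset.card_le_card
              intro j' hj'
              simp only [Finset.mem_filter, Finset.mem_range] at hj' ⊢
              by_contra hge
              exact hj'.2 (monoJ (le_of_not_gt hge) hneed)
          _ = j := Finset.card_range j
      have hT : i + 1 ≤ ((Finset.range (n+1)).filter (fun i' => needA i' j)).card := by
        calc i + 1 = (Finset.range (i+1)).card := (Finset.card_range _).symm
          _ ≤ _ := by
              apply Finset.card_le_card
              intro i' hi'
              simp only [Finset.mem_filter, Finset.mem_range] at hi' ⊢
              exact ⟨by omega, monoI (by omega) hneed⟩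
      simp only [hα, hβ]
      omega
    have key2 : ∀ i j, i ≤ n → j ≤ m → ¬ needA i j → β j < α i := by
      intro i j hin hjm hneed
      have hT : ((Finset.range (n+1)).filter (fun i' => needA i' j)).card ≤ i := by
        calc ((Finset.range (n+1)).filter (fun i' => needA i' j)).card
            ≤ (Finset.range i).card := by
              apply Finset.card_le_card
              intro i' hi'
              simp only [Finset.mem_filter, Finset.mem_range] at hi' ⊢
              by_contra hge
              exact hneed (monoI (le_of_not_gt hge) hi'.2)
          _ = i := Finset.card_range i
      have hS : j + 1 ≤ ((Finset.range (m+1)).filter (fun j' => ¬ needA i j')).card := by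
        calc j + 1 = (Finset.range (j+1)).card := (Finset.card_range _).symm
          _ ≤ _ := by
              apply Finset.card_le_card
              intro j' hj'
              simp only [Finset.mem_filter, Finset.mem_range] at hj' ⊢
              exact ⟨by omega, fun hcontra => hneed (monoJ (by omega) hcontra)⟩
      simp only [hα, hβ]
      omega
    have halfiff : ∀ a b : ℕ, ((a:ℝ) ≤ (b:ℝ) - 2⁻¹) ↔ a < b := by
      intro a b
      constructor
      · intro hab
        have : (a:ℝ) < b := by linarith
        exact_mod_cast this
      · intro hab
        have : (a:ℝ) + 1 ≤ b := by exact_mod_cast hab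
        linarith
    refine ⟨Sum.elim (fun x => (α (σ x) : ℝ)) (fun y => (β (ρ y) : ℝ)),
      Sum.elim (fun x => (β (f x) : ℝ) - 2⁻¹) (fun y => (α (g y) : ℝ) - 2⁻¹), ?_, ?_⟩
    · rintro (x | y)
      · simp only [Sum.elim_inl]
        exact (halfiff _ _).mpr (key1 (σ x) (f x) (hσn x) (hfm x) ⟨x, le_rfl, le_rfl⟩)
      · simp only [Sum.elim_inr]
        refine (halfiff _ _).mpr (key2 (g y) (ρ y) (hgn y) (hρm y) ?_)
        rintro ⟨x, hgx, hfx⟩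
        have h1 := (hR x y).mpr hfx
        have h2 := (hC x y).mpr hgx
        exact absurd (h1.2 ▸ ((hC x y).symm.mp hgx).2) (by simp)
    · intro x y
      simp only [Sum.elim_inl, Sum.elim_inr]
      rw [hE2 x y, halfiff, halfiff, hαmono.lt_iff_lt, hβmono.lt_iff_lt]
      tauto
end

section
/- Let X and Y be finite nonempty sets and let E : X → Y → Prop be a bipartite relation (a bigraph). Then E admits an interval bigraph representation if and only if there exist two Ferrers relations F₁, F₂ : X → Y → Prop such that E is their intersection (for all x, y: E x y ↔ F₁ x y ∧ F₂ x y) and their union is complete (for all x, y: F₁ x y ∨ F₂ x y). -/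
/-- `F` is a Ferrers relation. -/
def IsFerrers {X Y : Type*} (F : X → Y → Prop) : Prop :=
  ∀ x x' y y', F x y → F x' y' → F x y' ∨ F x' y

open Finset

lemma ferrers_rep {X Y : Type*} [Fintype X] [Fintype Y] [Nonempty X]
    (F : X → Y → Prop) (hF : IsFerrers F) :
    ∃ (a : X → ℝ) (c : Y → ℝ), ∀ x y, F x y ↔ c y ≤ a x := by
  classical
  set a : X → ℝ := fun x => ((univ.filter (fun y => F x y)).card : ℝ) with ha
  set M : ℝ := univ.sup' univ_nonempty a + 1 with hM
  refine ⟨a, fun y => if h : (univ.filter (fun x => F x y)).Nonempty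
      then (univ.filter (fun x => F x y)).inf' h a else M, fun x y => ?_⟩
  constructor
  · intro hxy
    have hne : (univ.filter (fun x => F x y)).Nonempty := ⟨x, by simp [hxy]⟩
    dsimp only
    rw [dif_pos hne]
    exact inf'_le a (by simp [hxy])
  · intro hle
    by_cases h : (univ.filter (fun x => F x y)).Nonempty
    · dsimp only at hle
      rw [dif_pos h] at hle
      obtain ⟨x₀, hx₀mem, hx₀⟩ := exists_mem_eq_inf' h a
      simp only [mem_filter, mem_univ, true_and] at hx₀mem
      rw [hx₀] at hle
      by_contra hnxy
      have hsub : univ.filter (fun y' => F x y') ⊆ univ.filter (fun y' => F x₀ y') := by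
        intro y' hy'
        simp only [mem_filter, mem_univ, true_and] at hy' ⊢
        rcases hF x x₀ y' y hy' hx₀mem with h1 | h1
        · exact absurd h1 hnxy
        · exact h1
      have hcard : (univ.filter (fun y' => F x₀ y')).card ≤ (univ.filter (fun y' => F x y')).card := by
        have := hle
        simp only [ha] at this
        exact_mod_cast this
      have heq := eq_of_subset_of_card_le hsub hcard
      apply hnxy
      have : y ∈ univ.filter (fun y' => F x y') := by rw [heq]; simp [hx₀mem]
      simpa using this
    · dsimp only at hle
      rw [dif_neg h] at hle
      have : a x ≤ univ.sup' univ_nonempty a := le_sup' a (mem_univ x)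
      simp only [hM] at hle
      linarith

lemma interval_embed {X Y : Type*} [Fintype X] [Fintype Y] [Nonempty X] [Nonempty Y]
    (p b : X → ℝ) (q d : Y → ℝ) (ε : ℝ) (hε : 0 < ε)
    (hmargin : ∀ x y, b x ≤ d y → p x ≤ q y - ε) :
    ∃ (b' : X → ℝ) (d' : Y → ℝ), (∀ x, p x ≤ b' x) ∧ (∀ y, d' y ≤ q y) ∧
      (∀ x y, d y ≤ b x → d' y ≤ b' x) ∧ (∀ x y, b x < d y → b' x < d' y) := by
  classical
  set t : X ⊕ Y → ℝ := Sum.elim b d with ht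
  set m : ℝ := univ.inf' univ_nonempty q - ε - 1 with hm
  have hmq : ∀ y, m ≤ q y - ε := by
    intro y
    have := inf'_le q (mem_univ y)
    simp only [hm]
    linarith
  set base : X ⊕ Y → ℝ :=
    fun v => (insert m ((univ.filter (fun x => b x ≤ t v)).image p)).max'
      (insert_nonempty _ _) with hbase
  set rank : X ⊕ Y → ℕ := fun v => (univ.filter (fun u => t u < t v)).card with hrank
  set K : ℕ := Fintype.card (X ⊕ Y) with hK
  have hK1 : (0:ℝ) < (K:ℝ) + 1 := by
    have : (0:ℝ) ≤ (K:ℝ) := Nat.cast_nonneg K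
    linarith
  set δ : ℝ := ε / ((K:ℝ) + 1) with hδ
  have hδpos : 0 < δ := div_pos hε hK1
  set f : X ⊕ Y → ℝ := fun v => base v + δ * rank v with hf
  have hbase_mono : ∀ u v, t u ≤ t v → base u ≤ base v := by
    intro u v huv
    apply max'_subset
    apply insert_subset_insert
    apply image_subset_image
    intro x hx
    simp only [mem_filter, mem_univ, true_and] at hx ⊢
    linarith
  have hrank_mono : ∀ u v, t u ≤ t v → rank u ≤ rank v := by
    intro u v huv
    apply card_le_card
    intro z hz
    simp only [mem_filter, mem_univ, true_and] at hz ⊢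
    linarith
  have hrank_strict : ∀ u v, t u < t v → rank u < rank v := by
    intro u v huv
    apply card_lt_card
    rw [Finset.ssubset_iff_of_subset]
    · exact ⟨u, by simp [huv], by simp⟩
    · intro z hz
      simp only [mem_filter, mem_univ, true_and] at hz ⊢
      linarith
  have hf_mono : ∀ u v, t u ≤ t v → f u ≤ f v := by
    intro u v huv
    have h1 := hbase_mono u v huv
    have h2 : (rank u : ℝ) ≤ rank v := Nat.cast_le.mpr (hrank_mono u v huv)
    have h3 : δ * (rank u : ℝ) ≤ δ * rank v := mul_le_mul_of_nonneg_left h2 hδpos.le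
    simp only [hf]
    linarith
  have hf_strict : ∀ u v, t u < t v → f u < f v := by
    intro u v huv
    have h1 := hbase_mono u v huv.le
    have h2 : (rank u : ℝ) < rank v := Nat.cast_lt.mpr (hrank_strict u v huv)
    have h3 : δ * (rank u : ℝ) < δ * rank v := mul_lt_mul_of_pos_left h2 hδpos
    simp only [hf]
    linarith
  refine ⟨fun x => f (Sum.inl x), fun y => f (Sum.inr y), ?_, ?_, ?_, ?_⟩
  · intro x
    have hmem : p x ∈ insert m ((univ.filter (fun x' => b x' ≤ t (Sum.inl x))).image p) := by
      apply mem_insert_of_mem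
      apply mem_image_of_mem
      simp [ht]
    have h1 : p x ≤ base (Sum.inl x) := le_max' _ _ hmem
    have h2 : (0:ℝ) ≤ δ * rank (Sum.inl x) :=
      mul_nonneg hδpos.le (Nat.cast_nonneg _)
    simp only [hf]
    linarith
  · intro y
    have hbb : base (Sum.inr y) ≤ q y - ε := by
      apply max'_le
      intro a ha
      rcases mem_insert.mp ha with h1 | h1
      · subst h1
        exact hmq y
      · obtain ⟨x', hx', rfl⟩ := mem_image.mp h1
        simp only [mem_filter, mem_univ, true_and, ht, Sum.elim_inr] at hx'
        exact hmargin x' y hx'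
    have hrK : (rank (Sum.inr y) : ℝ) ≤ (K:ℝ) := by
      have h0 : rank (Sum.inr y) ≤ K := by
        rw [hK]
        exact (card_le_univ _).trans (le_of_eq card_univ)
      exact_mod_cast h0
    have hδK : δ * (K:ℝ) < ε := by
      have h1 : δ * ((K:ℝ) + 1) = ε := div_mul_cancel₀ ε (ne_of_gt hK1)
      have h2 : δ * ((K:ℝ) + 1) = δ * (K:ℝ) + δ := by ring
      linarith
    have h3 : δ * (rank (Sum.inr y) : ℝ) ≤ δ * (K:ℝ) :=
      mul_le_mul_of_nonneg_left hrK hδpos.le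
    simp only [hf]
    linarith
  · intro x y hxy
    apply hf_mono
    simp only [ht, Sum.elim_inl, Sum.elim_inr]
    exact hxy
  · intro x y hxy
    apply hf_strict
    simp only [ht, Sum.elim_inl, Sum.elim_inr]
    exact hxy


theorem interval_bigraph_iff_intersection_of_two_ferrers_with_complete_union
    {X Y : Type*} [Fintype X] [Fintype Y] [Nonempty X] [Nonempty Y]
    (E : X → Y → Prop) :
    IntervalBigraphRep E ↔
      ∃ F₁ F₂ : X → Y → Prop, IsFerrers F₁ ∧ IsFerrers F₂ ∧
        (∀ x y, E x y ↔ F₁ x y ∧ F₂ x y) ∧ (∀ x y, F₁ x y ∨ F₂ x y) := by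
  classical
  constructor
  · rintro ⟨l, r, hlr, hrep⟩
    refine ⟨fun x y => l (Sum.inl x) ≤ r (Sum.inr y),
            fun x y => l (Sum.inr y) ≤ r (Sum.inl x), ?_, ?_, ?_, ?_⟩
    · intro x x' y y' h1 h2
      by_contra hc
      push_neg at hc
      obtain ⟨hc1, hc2⟩ := hc
      have := hlr (Sum.inl x)
      have := hlr (Sum.inl x')
      have := hlr (Sum.inr y)
      have := hlr (Sum.inr y')
      linarith
    · intro x x' y y' h1 h2
      by_contra hc
      push_neg at hc
      obtain ⟨hc1, hc2⟩ := hc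
      have := hlr (Sum.inl x)
      have := hlr (Sum.inl x')
      have := hlr (Sum.inr y)
      have := hlr (Sum.inr y')
      linarith
    · exact hrep
    · intro x y
      by_contra hc
      push_neg at hc
      obtain ⟨hc1, hc2⟩ := hc
      have := hlr (Sum.inl x)
      have := hlr (Sum.inr y)
      linarith
  · rintro ⟨F₁, F₂, hFer1, hFer2, hE, hU⟩
    obtain ⟨q, p, hF1⟩ := ferrers_rep (fun y x => F₁ x y)
        (fun y y' x x' h1 h2 => hFer1 x' x y' y h2 h1)
    obtain ⟨b0, d, hF2⟩ := ferrers_rep F₂ hFer2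
    -- perturb p
    set S₁ : Finset (X × Y) := univ.filter (fun z => q z.2 < p z.1) with hS₁
    set ε₁ : ℝ := if h : S₁.Nonempty then S₁.inf' h (fun z => p z.1 - q z.2) else 1 with hε₁
    have hε₁pos : 0 < ε₁ := by
      rw [hε₁]
      split_ifs with h
      · rw [Finset.lt_inf'_iff]
        intro z hz
        simp only [hS₁, mem_filter, mem_univ, true_and] at hz
        linarith
      · norm_num
    have hε₁gap : ∀ x y, q y < p x → ε₁ ≤ p x - q y := by
      intro x y hxy
      have hmem : (x, y) ∈ S₁ := by simp [hS₁, hxy]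
      rw [hε₁, dif_pos ⟨(x, y), hmem⟩]
      exact inf'_le _ hmem
    set p₂ : X → ℝ := fun x => p x - ε₁ / 2 with hp₂
    have hP1 : ∀ x y, F₁ x y ↔ p₂ x ≤ q y := by
      intro x y
      constructor
      · intro hxy
        have := (hF1 y x).mp hxy
        simp only [hp₂]
        linarith
      · intro hle
        rw [hF1]
        by_contra hn
        push_neg at hn
        have := hε₁gap x y hn
        simp only [hp₂] at hle
        linarith
    have hP2 : ∀ x y, ¬F₂ x y → p x ≤ q y := by
      intro x y hn
      exact (hF1 y x).mp ((hU x y).resolve_right hn)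
    -- perturb b
    set S₂ : Finset (X × Y) := univ.filter (fun z => b0 z.1 < d z.2) with hS₂
    set ε₂ : ℝ := if h : S₂.Nonempty then S₂.inf' h (fun z => d z.2 - b0 z.1) else 1 with hε₂
    have hε₂pos : 0 < ε₂ := by
      rw [hε₂]
      split_ifs with h
      · rw [Finset.lt_inf'_iff]
        intro z hz
        simp only [hS₂, mem_filter, mem_univ, true_and] at hz
        linarith
      · norm_num
    have hε₂gap : ∀ x y, b0 x < d y → ε₂ ≤ d y - b0 x := by
      intro x y hxy
      have hmem : (x, y) ∈ S₂ := by simp [hS₂, hxy]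
      rw [hε₂, dif_pos ⟨(x, y), hmem⟩]
      exact inf'_le _ hmem
    set b₂ : X → ℝ := fun x => b0 x + ε₂ / 2 with hb₂
    have hB1 : ∀ x y, F₂ x y → d y < b₂ x := by
      intro x y hxy
      have := (hF2 x y).mp hxy
      simp only [hb₂]
      linarith
    have hB2 : ∀ x y, ¬F₂ x y → b₂ x < d y := by
      intro x y hn
      have h1 : b0 x < d y := by
        by_contra hc
        push_neg at hc
        exact hn ((hF2 x y).mpr hc)
      have := hε₂gap x y h1
      simp only [hb₂]
      linarith
    -- combined construction
    have hmargin : ∀ x y, b₂ x ≤ d y → p₂ x ≤ q y - ε₁ / 2 := by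
      intro x y hxy
      have hnF2 : ¬F₂ x y := by
        intro hc
        have := hB1 x y hc
        linarith
      have := hP2 x y hnF2
      simp only [hp₂]
      linarith
    obtain ⟨b', d', h1, h2, h3, h4⟩ :=
      interval_embed p₂ b₂ q d (ε₁ / 2) (by linarith) hmargin
    have hF2' : ∀ x y, F₂ x y ↔ d' y ≤ b' x := by
      intro x y
      constructor
      · intro hxy
        exact h3 x y (hB1 x y hxy).le
      · intro hle
        by_contra hn
        have := h4 x y (hB2 x y hn)
        linarith
    refine ⟨Sum.elim p₂ d', Sum.elim b' q, ?_, ?_⟩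
    · rintro (x | y)
      · simpa using h1 x
      · simpa using h2 y
    · intro x y
      simp only [Sum.elim_inl, Sum.elim_inr]
      rw [hE x y, hP1 x y, hF2' x y]
end

section
/- Let X and Y be finite nonempty sets and let E : X → Y → Prop be a bipartite relation. Then E has Ferrers dimension at most 2 (i.e., there exist Ferrers relations F₁, F₂ with E x y ↔ F₁ x y ∧ F₂ x y for all x, y) if and only if there exist linear orders on X and on Y such that no zero entry of the biadjacency matrix has a one both below it and to its right: for all x ∈ X, y ∈ Y with ¬E x y, it is not the case that both (∃ x' > x with E x' y) and (∃ y' > y with E x y'). -/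
/-- `E` has Ferrers dimension at most 2: it is the intersection of two Ferrers relations. -/
def FerrersDimLE2 {X Y : Type*} (E : X → Y → Prop) : Prop :=
  ∃ F₁ F₂ : X → Y → Prop, IsFerrers F₁ ∧ IsFerrers F₂ ∧
    ∀ x y, E x y ↔ F₁ x y ∧ F₂ x y

/-- For a Ferrers relation on finite types there is a linear order on the rows
making the row sets decreasing. -/
lemma ferrers_order {X Y : Type*} [Fintype X] [Fintype Y] (F : X → Y → Prop)
    (hF : IsFerrers F) :
    ∃ l : LinearOrder X, ∀ x x', l.lt x x' → ∀ y, F x' y → F x y := by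
  classical
  set row : X → Finset Y := fun x => Finset.univ.filter (fun y => F x y) with hrow
  have hmem : ∀ x y, y ∈ row x ↔ F x y := by simp [row]
  have hchain : ∀ x x', row x ⊆ row x' ∨ row x' ⊆ row x := by
    intro x x'
    by_contra hc
    push_neg at hc
    obtain ⟨h1, h2⟩ := hc
    rw [Finset.not_subset] at h1 h2
    obtain ⟨y, hy, hy'⟩ := h1
    obtain ⟨y', hy1, hy2⟩ := h2
    rw [hmem] at hy hy1
    rw [hmem] at hy' hy2
    rcases hF x x' y y' hy hy1 with h | h
    · exact hy2 h
    · exact hy' h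
  let e := Fintype.equivFin X
  let h : X → Lex (ℕᵒᵈ × Fin (Fintype.card X)) :=
    fun x => toLex (OrderDual.toDual (row x).card, e x)
  have hinj : Function.Injective h := by
    intro a b hab
    have h2 : (OrderDual.toDual (row a).card, e a) = (OrderDual.toDual (row b).card, e b) := hab
    exact e.injective (congrArg Prod.snd h2)
  refine ⟨LinearOrder.lift' h hinj, ?_⟩
  intro x x' hlt y hFy
  have hlt' : h x < h x' := hlt
  rw [Prod.Lex.lt_iff] at hlt'
  have hcard : (row x').card ≤ (row x).card := by
    rcases hlt' with h1 | ⟨h1, _⟩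
    · exact le_of_lt (OrderDual.toDual_lt_toDual.mp h1)
    · exact le_of_eq (OrderDual.toDual_inj.mp h1).symm
  have hsub : row x' ⊆ row x := by
    rcases hchain x x' with hs | hs
    · rw [Finset.eq_of_subset_of_card_le hs hcard]
    · exact hs
  exact (hmem x y).1 (hsub ((hmem x' y).2 hFy))

theorem ferrers_dim_le_two_iff_no_zero_with_one_below_and_right
    {X Y : Type*} [Fintype X] [Fintype Y] [Nonempty X] [Nonempty Y]
    (E : X → Y → Prop) :
    FerrersDimLE2 E ↔
      ∃ (lX : LinearOrder X) (lY : LinearOrder Y),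
        ∀ x y, ¬ E x y →
          ¬ ((∃ x', lX.lt x x' ∧ E x' y) ∧ (∃ y', lY.lt y y' ∧ E x y')) := by
  constructor
  · rintro ⟨F₁, F₂, hF₁, hF₂, hE⟩
    obtain ⟨lX, hlX⟩ := ferrers_order F₁ hF₁
    have hG : IsFerrers (fun y x => F₂ x y) := by
      intro y y' x x' h1 h2
      exact (hF₂ x x' y y' h1 h2).symm
    obtain ⟨lY, hlY⟩ := ferrers_order (fun y x => F₂ x y) hG
    refine ⟨lX, lY, ?_⟩
    rintro x y hnE ⟨⟨x', hxx', hEx'⟩, ⟨y', hyy', hEy'⟩⟩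
    apply hnE
    rw [hE]
    refine ⟨hlX x x' hxx' y ((hE x' y).1 hEx').1, hlY y y' hyy' x ((hE x y').1 hEy').2⟩
  · rintro ⟨lX, lY, hstair⟩
    letI := lX
    letI := lY
    refine ⟨fun x y => ∃ x', x ≤ x' ∧ E x' y, fun x y => ∃ y', y ≤ y' ∧ E x y', ?_, ?_, ?_⟩
    · rintro x x' y y' ⟨a, hxa, hEa⟩ ⟨b, hx'b, hEb⟩
      rcases le_total x x' with hxx | hxx
      · exact Or.inl ⟨b, le_trans hxx hx'b, hEb⟩
      · exact Or.inr ⟨a, le_trans hxx hxa, hEa⟩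
    · rintro x x' y y' ⟨a, hya, hEa⟩ ⟨b, hy'b, hEb⟩
      rcases le_total y y' with hyy | hyy
      · exact Or.inr ⟨b, le_trans hyy hy'b, hEb⟩
      · exact Or.inl ⟨a, le_trans hyy hya, hEa⟩
    · intro x y
      constructor
      · intro hExy
        exact ⟨⟨x, le_refl x, hExy⟩, ⟨y, le_refl y, hExy⟩⟩
      · rintro ⟨⟨x', hxx', hEx'⟩, ⟨y', hyy', hEy'⟩⟩
        by_contra hnE
        rcases hxx'.lt_or_eq with hlt1 | heq1
        · rcases hyy'.lt_or_eq with hlt2 | heq2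
          · exact hstair x y hnE ⟨⟨x', hlt1, hEx'⟩, ⟨y', hlt2, hEy'⟩⟩
          · exact hnE (heq2 ▸ hEy')
        · exact hnE (heq1 ▸ hEx')
end

section
/- A finite simple graph G = (V, E) is a co-TT graph (the complement of a threshold tolerance graph) if and only if one can assign positive real numbers a_v and b_v to each vertex v ∈ V such that for all distinct vertices x and y: x is adjacent to y in G if and only if a_x ≤ b_y and a_y ≤ b_x. -/
/-- `H` is a threshold tolerance graph: there are positive weights `w` and positive
tolerances `t` on the vertices so that distinct vertices `u`, `v` are adjacent iff
`w u + w v > min (t u) (t v)`. -/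
def IsThresholdTolerance {V : Type*} (H : SimpleGraph V) : Prop :=
  ∃ w t : V → ℝ, (∀ v, 0 < w v) ∧ (∀ v, 0 < t v) ∧
    ∀ u v : V, u ≠ v → (H.Adj u v ↔ w u + w v > min (t u) (t v))

/-- `G` is a co-TT graph: its complement is a threshold tolerance graph. -/
def IsCoTT {V : Type*} (G : SimpleGraph V) : Prop :=
  IsThresholdTolerance Gᶜ

theorem coTT_iff_positive_pair_assignment
    {V : Type*} [Fintype V] (G : SimpleGraph V) :
    IsCoTT G ↔
      ∃ a b : V → ℝ, (∀ v, 0 < a v) ∧ (∀ v, 0 < b v) ∧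
        ∀ x y : V, x ≠ y → (G.Adj x y ↔ a x ≤ b y ∧ a y ≤ b x) := by
  classical
  constructor
  · rintro ⟨w, t, hw, ht, h⟩
    refine ⟨w, fun v => if 0 < t v - w v then t v - w v else
      (Finset.univ.inf' ⟨v, Finset.mem_univ v⟩ w) / 2, hw, ?_, ?_⟩
    · intro v
      beta_reduce
      by_cases hv : 0 < t v - w v
      · rw [if_pos hv]; exact hv
      · have hinf : 0 < Finset.univ.inf' ⟨v, Finset.mem_univ v⟩ w :=
          (Finset.lt_inf'_iff _).2 fun i _ => hw i
        rw [if_neg hv]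
        linarith
    · intro x y hxy
      have hadj : G.Adj x y ↔ w y ≤ t x - w x ∧ w x ≤ t y - w y := by
        have hcomp := h x y hxy
        rw [SimpleGraph.compl_adj] at hcomp
        constructor
        · intro hG
          have : ¬ (w x + w y > min (t x) (t y)) := by
            intro hgt
            exact (hcomp.2 hgt).2 hG
          push_neg at this
          rw [le_min_iff] at this
          constructor <;> linarith [this.1, this.2]
        · intro ⟨h1, h2⟩
          by_contra hG
          have := hcomp.1 ⟨hxy, hG⟩
          rw [gt_iff_lt, min_lt_iff] at this
          rcases this with h3 | h3 <;> linarith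
      rw [hadj]
      beta_reduce
      have key : ∀ u v : V, (w u ≤ (if 0 < t v - w v then t v - w v else
          (Finset.univ.inf' ⟨v, Finset.mem_univ v⟩ w) / 2)) ↔ w u ≤ t v - w v := by
        intro u v
        by_cases hv : 0 < t v - w v
        · simp [hv]
        · have hinf : Finset.univ.inf' ⟨v, Finset.mem_univ v⟩ w ≤ w u :=
            Finset.inf'_le _ (Finset.mem_univ u)
          have hinfpos : 0 < Finset.univ.inf' ⟨v, Finset.mem_univ v⟩ w :=
            (Finset.lt_inf'_iff _).2 fun i _ => hw i
          simp only [hv, if_false]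
          constructor <;> intro hle
          · linarith
          · linarith [hw u]
      rw [key x y, key y x, and_comm]
  · rintro ⟨a, b, ha, hb, h⟩
    refine ⟨a, fun v => a v + b v, ha, fun v => by beta_reduce; linarith [ha v, hb v], ?_⟩
    intro u v huv
    rw [SimpleGraph.compl_adj]
    beta_reduce
    have := h u v huv
    constructor
    · rintro ⟨-, hG⟩
      rw [this] at hG
      push_neg at hG
      rw [gt_iff_lt, min_lt_iff]
      by_cases h1 : a u ≤ b v
      · have := hG h1
        left; linarith
      · push_neg at h1
        right; linarith
    · intro hgt
      refine ⟨huv, ?_⟩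
      rw [this]
      rw [gt_iff_lt, min_lt_iff] at hgt
      rintro ⟨h1, h2⟩
      rcases hgt with h3 | h3 <;> linarith
end

section
/- Let X and Y be finite nonempty sets and let E : X → Y → Prop be a bipartite relation (a bigraph B). Then B is a signed interval bigraph (E admits a signed interval representation) if and only if B has Ferrers dimension at most 2, i.e., there exist Ferrers relations F₁, F₂ : X → Y → Prop with E x y ↔ F₁ x y ∧ F₂ x y for all x, y. -/
/-- A signed interval representation of a bipartite relation `E` between `X` and `Y`:
each element of `X ⊕ Y` gets a (possibly negative) interval `(l v, r v)`, and
`E x y` holds iff `l x ≤ r y` and `l y ≤ r x`. -/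
def SignedIntervalBigraphRep {X Y : Type*} (E : X → Y → Prop) : Prop :=
  ∃ l r : X ⊕ Y → ℝ,
    ∀ x y, E x y ↔ (l (Sum.inl x) ≤ r (Sum.inr y) ∧ l (Sum.inr y) ≤ r (Sum.inl x))

/-- A Ferrers relation on finite types has a threshold representation. -/
lemma ferrers_threshold {X Y : Type*} [Fintype X] [Fintype Y] {F : X → Y → Prop}
    (hF : IsFerrers F) : ∃ f : X → ℝ, ∃ g : Y → ℝ, ∀ x y, F x y ↔ f x ≤ g y := by
  classical
  set g : Y → ℝ := fun y => ((Finset.univ.filter (fun x => F x y)).card : ℝ) with hg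
  have hnest : ∀ y y' x, g y ≤ g y' → F x y → F x y' := by
    intro y y' x hle hxy
    by_contra hxy'
    have hsub : (Finset.univ.filter (fun x' => F x' y')) ⊆
        (Finset.univ.filter (fun x' => F x' y)) := by
      intro x' hx'
      simp only [Finset.mem_filter, Finset.mem_univ, true_and] at hx' ⊢
      rcases hF x x' y y' hxy hx' with h | h
      · exact absurd h hxy'
      · exact h
    have hss : (Finset.univ.filter (fun x' => F x' y')) ⊂
        (Finset.univ.filter (fun x' => F x' y)) := by
      refine hsub.ssubset_of_ne ?_
      intro h
      have hx : x ∈ Finset.univ.filter (fun x' => F x' y) := by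
        simp [hxy]
      rw [← h] at hx
      simp only [Finset.mem_filter, Finset.mem_univ, true_and] at hx
      exact hxy' hx
    have := Finset.card_lt_card hss
    have hlt : g y' < g y := by simp only [hg]; exact_mod_cast this
    linarith
  set S : X → Finset Y := fun x => Finset.univ.filter (fun y => F x y) with hS
  refine ⟨fun x => if h : (S x).Nonempty then ((S x).image g).min' (h.image g)
    else (Fintype.card X : ℝ) + 1, g, fun x y => ?_⟩
  have hgle : ∀ y, g y ≤ Fintype.card X := by
    intro y
    simp only [hg]
    exact_mod_cast Finset.card_filter_le _ _
  constructor
  · intro hxy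
    have hne : (S x).Nonempty := ⟨y, by simp [hS, hxy]⟩
    simp only [dif_pos hne]
    exact Finset.min'_le _ _ (Finset.mem_image_of_mem g (by simp [hS, hxy]))
  · intro hle
    by_cases hne : (S x).Nonempty
    · beta_reduce at hle
      rw [dif_pos hne] at hle
      obtain ⟨y₀, hy₀, hgy₀⟩ := Finset.mem_image.mp (Finset.min'_mem ((S x).image g) (hne.image g))
      simp only [hS, Finset.mem_filter, Finset.mem_univ, true_and] at hy₀
      exact hnest y₀ y x (hgy₀ ▸ hle) hy₀
    · beta_reduce at hle
      rw [dif_neg hne] at hle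
      have := hgle y
      linarith

theorem signed_interval_bigraph_iff_ferrers_dim_le_two
    {X Y : Type*} [Fintype X] [Fintype Y] [Nonempty X] [Nonempty Y]
    (E : X → Y → Prop) :
    SignedIntervalBigraphRep E ↔
      ∃ F₁ F₂ : X → Y → Prop, IsFerrers F₁ ∧ IsFerrers F₂ ∧
        ∀ x y, E x y ↔ F₁ x y ∧ F₂ x y := by
  constructor
  · rintro ⟨l, r, hlr⟩
    refine ⟨fun x y => l (Sum.inl x) ≤ r (Sum.inr y),
      fun x y => l (Sum.inr y) ≤ r (Sum.inl x), ?_, ?_, fun x y => hlr x y⟩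
    · intro x x' y y' h h'
      rcases le_total (l (Sum.inl x)) (l (Sum.inl x')) with hx | hx
      · exact Or.inl (hx.trans h')
      · exact Or.inr (hx.trans h)
    · intro x x' y y' h h'
      rcases le_total (l (Sum.inr y)) (l (Sum.inr y')) with hy | hy
      · exact Or.inr (hy.trans h')
      · exact Or.inl (hy.trans h)
  · rintro ⟨F₁, F₂, h₁, h₂, hE⟩
    obtain ⟨f₁, g₁, hfg₁⟩ := ferrers_threshold h₁
    obtain ⟨f₂, g₂, hfg₂⟩ := ferrers_threshold h₂
    refine ⟨Sum.elim f₁ (fun y => -g₂ y), Sum.elim (fun x => -f₂ x) g₁, fun x y => ?_⟩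
    simp only [Sum.elim_inl, Sum.elim_inr, neg_le_neg_iff]
    rw [hE x y, hfg₁ x y, hfg₂ x y]
end

section
/- Let G be a finite simple graph on vertex set V. Then G admits a signed interval representation (l, r) in which at least one interval is positive (l v ≤ r v) and at least one interval is negative (l v > r v), if and only if there exists a function d : V → Bool taking both values true and false, and a linear order on V, such that the symmetric matrix M defined by M v v = d v and, for u ≠ v, M u v = (u adjacent to v), has no zero entry with a one both below it and to its right: for all u, v with ¬M u v, it is not the case that both (∃ u' > u with M u' v) and (∃ v' > v with M u v'). -/
/-- The augmented adjacency matrix of `G` with diagonal entries given by `d`,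
viewed as a relation: `M u v` holds iff `u = v` and `d v = true`, or `u ≠ v`
and `u` is adjacent to `v`. -/
def AugmentedAdj {V : Type*} (G : SimpleGraph V) (d : V → Bool) (u v : V) : Prop :=
  (u = v ∧ d v = true) ∨ (u ≠ v ∧ G.Adj u v)

theorem signed_interval_graph_mixed_iff_matrix_condition
    {V : Type*} [Fintype V] (G : SimpleGraph V) :
    (∃ l r : V → ℝ, (∃ v, l v ≤ r v) ∧ (∃ v, r v < l v) ∧
        ∀ u v : V, u ≠ v → (G.Adj u v ↔ l u ≤ r v ∧ l v ≤ r u)) ↔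
      (∃ d : V → Bool, (∃ v, d v = true) ∧ (∃ v, d v = false) ∧
        ∃ lV : LinearOrder V,
          ∀ u v : V, ¬ AugmentedAdj G d u v →
            ¬ ((∃ u', lV.lt u u' ∧ AugmentedAdj G d u' v) ∧
               (∃ v', lV.lt v v' ∧ AugmentedAdj G d u v'))) := by
  classical
  constructor
  · rintro ⟨l, r, ⟨vp, hvp⟩, ⟨vn, hvn⟩, hadj⟩
    set d : V → Bool := fun v => decide (l v ≤ r v) with hd
    have hM : ∀ u v, AugmentedAdj G d u v ↔ (l u ≤ r v ∧ l v ≤ r u) := by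
      intro u v
      by_cases h : u = v
      · subst h
        simp [AugmentedAdj, hd, and_self]
      · simp [AugmentedAdj, h, hadj u v h]
    refine ⟨d, ⟨vp, by simp [hd, hvp]⟩, ⟨vn, by simp [hd, not_le.2 hvn]⟩, ?_⟩
    set e : V → ℕ := fun v => (Fintype.equivFin V v : ℕ) with he
    have einj : Function.Injective e := by
      intro a b hab
      exact (Fintype.equivFin V).injective (Fin.ext hab)
    set key : V → Lex (ℝ × ℕ) := fun v => toLex (-(r v), e v) with hkey
    have kinj : Function.Injective key := by
      intro a b hab
      have : ((-(r a), e a) : ℝ × ℕ) = (-(r b), e b) := congrArg ofLex hab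
      exact einj (congrArg Prod.snd this)
    refine ⟨LinearOrder.lift' key kinj, ?_⟩
    have hr : ∀ a b : V, (LinearOrder.lift' key kinj).lt a b → r b ≤ r a := by
      intro a b hab
      have h1 : key a < key b := hab
      rw [hkey] at h1
      rcases Prod.Lex.lt_iff.1 h1 with h2 | h2
      · have := h2
        simp only [ofLex_toLex, neg_lt_neg_iff] at this
        exact this.le
      · have := h2.1
        simp only [ofLex_toLex, neg_inj] at this
        exact this.ge
    rintro u v hMuv ⟨⟨u', hu', hMu'v⟩, ⟨v', hv', hMuv'⟩⟩
    rw [hM] at hMuv hMu'v hMuv'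
    rcases not_and_or.1 hMuv with h | h
    · exact h (hMuv'.1.trans (hr _ _ hv'))
    · exact h (hMu'v.2.trans (hr _ _ hu'))
  · rintro ⟨d, ⟨vt, hvt⟩, ⟨vf, hvf⟩, lV, hcond⟩
    letI := lV
    set M : V → V → Prop := AugmentedAdj G d with hMdef
    have Msymm : ∀ u v, M u v → M v u := by
      rintro u v (⟨rfl, h⟩ | ⟨h, hadj⟩)
      · exact Or.inl ⟨rfl, by simpa using h⟩
      · exact Or.inr ⟨Ne.symm h, hadj.symm⟩
    set f : V → ℕ := fun v => (Finset.univ.filter (fun w => w < v)).card + 1 with hf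
    have fpos : ∀ v, 0 < f v := fun v => Nat.succ_pos _
    have fmono : ∀ a b : V, a < b → f a < f b := by
      intro a b hab
      have hss : (Finset.univ.filter (fun w => w < a)) ⊂ (Finset.univ.filter (fun w => w < b)) := by
        constructor
        · intro w hw
          simp only [Finset.mem_filter, Finset.mem_univ, true_and] at hw ⊢
          exact hw.trans hab
        · intro hsub
          have := hsub (by simp [hab] : a ∈ Finset.univ.filter (fun w => w < b))
          simp at this
      have h2 := Finset.card_lt_card hss
      simp only [hf]
      omega
    have fle : ∀ a b : V, f a ≤ f b → a ≤ b := by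
      intro a b hab
      by_contra h
      exact absurd hab (not_le.2 (fmono b a (not_le.1 h)))
    set S : V → Finset V := fun v => Finset.univ.filter (fun u => M u v) with hS
    set rN : V → ℕ := fun v => (S v).sup f with hrN
    have hEquiv : ∀ u v, M u v ↔ (f u ≤ rN v ∧ f v ≤ rN u) := by
      intro u v
      constructor
      · intro h
        exact ⟨Finset.le_sup (by simp [hS, h]), Finset.le_sup (by simp [hS, Msymm u v h])⟩
      · rintro ⟨h1, h2⟩
        by_contra hnM
        obtain ⟨u₀, hu₀S, hu₀⟩ := (Finset.le_sup_iff (fpos u)).1 h1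
        obtain ⟨v₀, hv₀S, hv₀⟩ := (Finset.le_sup_iff (fpos v)).1 h2
        have hMu₀v : M u₀ v := by simpa [hS] using hu₀S
        have hMv₀u : M v₀ u := by simpa [hS] using hv₀S
        have huu₀ : u < u₀ := by
          rcases lt_or_eq_of_le (fle u u₀ hu₀) with h | h
          · exact h
          · subst h; exact absurd hMu₀v hnM
        have hvv₀ : v < v₀ := by
          rcases lt_or_eq_of_le (fle v v₀ hv₀) with h | h
          · exact h
          · subst h; exact absurd (Msymm _ u hMv₀u) hnM
        exact hcond u v hnM ⟨⟨u₀, huu₀, hMu₀v⟩, ⟨v₀, hvv₀, Msymm v₀ u hMv₀u⟩⟩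
    refine ⟨fun v => (f v : ℝ), fun v => (rN v : ℝ), ⟨vt, ?_⟩, ⟨vf, ?_⟩, ?_⟩
    · have : M vt vt := Or.inl ⟨rfl, hvt⟩
      simp only [Nat.cast_le]
      exact ((hEquiv vt vt).1 this).1
    · have : ¬ M vf vf := by
        rintro (⟨_, h⟩ | ⟨h, _⟩)
        · rw [hvf] at h; exact Bool.false_ne_true h
        · exact h rfl
      have h2 : ¬ (f vf ≤ rN vf) := fun h => this ((hEquiv vf vf).2 ⟨h, h⟩)
      simp only [Nat.cast_lt]
      exact not_le.1 h2
    · intro u v huv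
      have : G.Adj u v ↔ M u v := by
        constructor
        · intro h; exact Or.inr ⟨huv, h⟩
        · rintro (⟨rfl, _⟩ | ⟨_, h⟩)
          · exact absurd rfl huv
          · exact h
      rw [this, hEquiv u v]
      simp only [Nat.cast_le]
end

section
/- Let G be a finite simple graph whose vertex set is partitioned into two sets X and Y, each of which is a clique in G. Then G is a circular arc graph (so a two-clique circular arc graph) if and only if the bipartite complement relation R : X → Y → Prop, defined by R x y ↔ x is not adjacent to y in G, has Ferrers dimension at most 2, i.e., there exist Ferrers relations F₁, F₂ with R x y ↔ F₁ x y ∧ F₂ x y for all x, y. -/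
/-- Membership of a point `p ∈ [0,1)` in the circular arc determined by endpoints
`s` and `t` in `[0,1)`: if `s ≤ t` the arc is `[s, t]`, and if `t < s` the arc wraps
around, consisting of the points `≥ s` together with the points `≤ t`. -/
def ArcMem (s t p : ℝ) : Prop :=
  (s ≤ t ∧ s ≤ p ∧ p ≤ t) ∨ (t < s ∧ (s ≤ p ∨ p ≤ t))

/-- `G` is a circular arc graph: each vertex gets a circular arc of the unit circle
(modeled via endpoints in `[0,1)`), and distinct vertices are adjacent iff their arcs
intersect. -/
def IsCircularArcGraph {V : Type*} (G : SimpleGraph V) : Prop :=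
  ∃ s t : V → ℝ, (∀ v, s v ∈ Set.Ico (0 : ℝ) 1) ∧ (∀ v, t v ∈ Set.Ico (0 : ℝ) 1) ∧
    ∀ u v : V, u ≠ v →
      (G.Adj u v ↔ ∃ p ∈ Set.Ico (0 : ℝ) 1, ArcMem (s u) (t u) p ∧ ArcMem (s v) (t v) p)

def CAInter (sa ta sb tb : ℝ) : Prop :=
  (sa ≤ ta ∧ sb ≤ tb ∧ sb ≤ ta ∧ sa ≤ tb) ∨
  (ta < sa ∧ sb ≤ tb ∧ (sb ≤ ta ∨ sa ≤ tb)) ∨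
  (sa ≤ ta ∧ tb < sb ∧ (sa ≤ tb ∨ sb ≤ ta)) ∨
  (ta < sa ∧ tb < sb)

lemma caInter_iff {sa ta sb tb : ℝ} (hsa0 : 0 ≤ sa) (hsa1 : sa < 1)
    (hta0 : 0 ≤ ta) (hta1 : ta < 1) (hsb0 : 0 ≤ sb) (hsb1 : sb < 1)
    (htb0 : 0 ≤ tb) (htb1 : tb < 1) :
    (∃ p ∈ Set.Ico (0:ℝ) 1, ArcMem sa ta p ∧ ArcMem sb tb p) ↔ CAInter sa ta sb tb := by
  constructor
  · rintro ⟨p, ⟨hp0, hp1⟩, hpa, hpb⟩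
    rcases hpa with ⟨h1, h2, h3⟩ | ⟨h1, h2⟩ <;> rcases hpb with ⟨g1, g2, g3⟩ | ⟨g1, g2⟩
    · exact Or.inl ⟨h1, g1, by linarith, by linarith⟩
    · refine Or.inr (Or.inr (Or.inl ⟨h1, g1, ?_⟩))
      rcases g2 with g | g
      · exact Or.inr (by linarith)
      · exact Or.inl (by linarith)
    · refine Or.inr (Or.inl ⟨h1, g1, ?_⟩)
      rcases h2 with h | h
      · exact Or.inr (by linarith)
      · exact Or.inl (by linarith)
    · exact Or.inr (Or.inr (Or.inr ⟨h1, g1⟩))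
  · rintro (⟨h1, h2, h3, h4⟩ | ⟨h1, h2, h3⟩ | ⟨h1, h2, h3⟩ | ⟨h1, h2⟩)
    · exact ⟨max sa sb, ⟨le_trans hsa0 (le_max_left _ _), max_lt hsa1 hsb1⟩,
        Or.inl ⟨h1, le_max_left _ _, max_le h1 h3⟩,
        Or.inl ⟨h2, le_max_right _ _, max_le h4 h2⟩⟩
    · rcases h3 with h | h
      · exact ⟨sb, ⟨hsb0, hsb1⟩, Or.inr ⟨h1, Or.inr h⟩, Or.inl ⟨h2, le_refl _, h2⟩⟩
      · exact ⟨max sa sb, ⟨le_trans hsa0 (le_max_left _ _), max_lt hsa1 hsb1⟩,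
          Or.inr ⟨h1, Or.inl (le_max_left _ _)⟩,
          Or.inl ⟨h2, le_max_right _ _, max_le h h2⟩⟩
    · rcases h3 with h | h
      · exact ⟨sa, ⟨hsa0, hsa1⟩, Or.inl ⟨h1, le_refl _, h1⟩, Or.inr ⟨h2, Or.inr h⟩⟩
      · exact ⟨max sa sb, ⟨le_trans hsa0 (le_max_left _ _), max_lt hsa1 hsb1⟩,
          Or.inl ⟨h1, le_max_left _ _, max_le h1 h⟩,
          Or.inr ⟨h2, Or.inl (le_max_right _ _)⟩⟩
    · exact ⟨0, ⟨le_refl _, one_pos⟩, Or.inr ⟨h1, Or.inr hta0⟩, Or.inr ⟨h2, Or.inr htb0⟩⟩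

lemma caInter_self {sa ta : ℝ} : CAInter sa ta sa ta := by
  rcases lt_or_ge ta sa with h | h
  · exact Or.inr (Or.inr (Or.inr ⟨h, h⟩))
  · exact Or.inl ⟨h, h, h, h⟩

lemma caInter_normal {sa ta sb tb : ℝ} (h : CAInter sa ta sb tb)
    (ha : ¬ ta < sa) (hb : ¬ tb < sb) : sb ≤ ta ∧ sa ≤ tb := by
  rcases h with ⟨_, _, h3, h4⟩ | ⟨h, _⟩ | ⟨_, h, _⟩ | ⟨h, _⟩ <;> first
    | exact ⟨h3, h4⟩ | exact absurd h ha | exact absurd h hb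
open scoped Classical

def CAct (sv tv : ℝ) : Prop := sv = 0 ∨ tv < sv

noncomputable def CAsg (sv tv : ℝ) : ℝ := if tv < sv then sv else 1

noncomputable def CArh (sv tv : ℝ) : ℝ := if CAct sv tv then CAsg sv tv else sv

def CAW1 (ta sb tb : ℝ) : Prop := ta < CArh sb tb

def CAW2 (sa ta sb tb : ℝ) : Prop :=
  (CAct sb tb ∧ ¬ CAct sa ta ∧ tb < sa) ∨ (¬ CAct sb tb ∧ tb < CAsg sa ta)

lemma caW1_ferrers {ta sb tb ta' sb' tb' : ℝ} (h : CAW1 ta sb tb) (h' : CAW1 ta' sb' tb') :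
    CAW1 ta sb' tb' ∨ CAW1 ta' sb tb := by
  rcases le_total ta ta' with hle | hle
  · exact Or.inl (lt_of_le_of_lt hle h')
  · exact Or.inr (lt_of_le_of_lt hle h)

lemma ca_sg_eq_one {sa ta : ℝ} (h : ¬ CAct sa ta) : CAsg sa ta = 1 := by
  rw [CAsg, if_neg]
  intro hlt; exact h (Or.inr hlt)

lemma caW2_ferrers {sa ta sb tb sa' ta' sb' tb' : ℝ} (htb1 : tb < 1) (htb1' : tb' < 1)
    (h : CAW2 sa ta sb tb) (h' : CAW2 sa' ta' sb' tb') :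
    CAW2 sa ta sb' tb' ∨ CAW2 sa' ta' sb tb := by
  by_contra hcon
  push_neg at hcon
  obtain ⟨hnb', hnb⟩ := hcon
  rcases h with ⟨cb, na, hts⟩ | ⟨ncb, hsg⟩ <;> rcases h' with ⟨cb', na', hts'⟩ | ⟨ncb', hsg'⟩
  · have h1 : ¬ tb' < sa := fun hh => hnb' (Or.inl ⟨cb', na, hh⟩)
    have h2 : ¬ tb < sa' := fun hh => hnb (Or.inl ⟨cb, na', hh⟩)
    push_neg at h1 h2
    linarith
  · exact hnb' (Or.inr ⟨ncb', by rw [ca_sg_eq_one na]; exact htb1'⟩)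
  · exact hnb (Or.inr ⟨ncb, by rw [ca_sg_eq_one na']; exact htb1⟩)
  · have h1 : ¬ tb' < CAsg sa ta := fun hh => hnb' (Or.inr ⟨ncb', hh⟩)
    have h2 : ¬ tb < CAsg sa' ta' := fun hh => hnb (Or.inr ⟨ncb, hh⟩)
    push_neg at h1 h2
    linarith

lemma ca_factor {sa ta sb tb dX dY : ℝ}
    (hta0 : 0 ≤ ta) (hta1 : ta < 1) (htb0 : 0 ≤ tb) (htb1 : tb < 1)
    (hda : CAct sa ta ∨ (sa ≤ dX ∧ dX ≤ ta)) (hdb : CAct sb tb ∨ (sb ≤ dY ∧ dY ≤ tb))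
    (hd : dX ≤ dY) :
    (¬ CAInter sa ta sb tb) ↔ (CAW1 ta sb tb ∧ CAW2 sa ta sb tb) := by
  by_cases hca : CAct sa ta <;> by_cases hcb : CAct sb tb
  · -- both contain 0 : arcs intersect, W2 false
    have hint : CAInter sa ta sb tb := by
      rcases hca with ha | ha <;> rcases hcb with hb | hb
      · exact Or.inl ⟨ha ▸ hta0, hb ▸ htb0, hb ▸ hta0, ha ▸ htb0⟩
      · exact Or.inr (Or.inr (Or.inl ⟨ha ▸ hta0, hb, Or.inl (ha ▸ htb0)⟩))
      · exact Or.inr (Or.inl ⟨ha, hb ▸ htb0, Or.inl (hb ▸ hta0)⟩)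
      · exact Or.inr (Or.inr (Or.inr ⟨ha, hb⟩))
    refine iff_of_false (not_not_intro hint) ?_
    rintro ⟨-, (⟨-, hna, -⟩ | ⟨hnb, -⟩)⟩
    · exact hna hca
    · exact hnb hcb
  · -- a contains 0, b does not
    have hsb : sb ≤ tb := by
      rcases not_or.mp hcb with ⟨-, h⟩; exact not_lt.mp h
    have hrh : CArh sb tb = sb := by rw [CArh, if_neg hcb]
    have hW2 : CAW2 sa ta sb tb ↔ tb < CAsg sa ta := by
      constructor
      · rintro (⟨hc, -, -⟩ | ⟨-, h⟩)
        · exact absurd hc hcb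
        · exact h
      · exact fun h => Or.inr ⟨hcb, h⟩
    by_cases hw : ta < sa
    · -- a wraps
      have hint : CAInter sa ta sb tb ↔ (sb ≤ ta ∨ sa ≤ tb) := by
        constructor
        · rintro (⟨h, -⟩ | ⟨-, -, h⟩ | ⟨-, h, -⟩ | ⟨-, h⟩)
          · exact absurd h (not_le.mpr hw)
          · exact h
          · exact absurd h (not_lt.mpr hsb)
          · exact absurd h (not_lt.mpr hsb)
        · exact fun h => Or.inr (Or.inl ⟨hw, hsb, h⟩)
      have hsg : CAsg sa ta = sa := by rw [CAsg, if_pos hw]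
      rw [hint, hW2, hsg, CAW1, hrh]
      push_neg
      tauto
    · -- a normal with sa = 0
      have hsa : sa = 0 := by
        rcases hca with h | h
        · exact h
        · exact absurd h hw
      have hint : CAInter sa ta sb tb ↔ sb ≤ ta := by
        constructor
        · rintro (⟨-, -, h, -⟩ | ⟨h, -⟩ | ⟨-, h, -⟩ | ⟨-, h⟩)
          · exact h
          · exact absurd h hw
          · exact absurd h (not_lt.mpr hsb)
          · exact absurd h (not_lt.mpr hsb)
        · exact fun h => Or.inl ⟨not_lt.mp hw, hsb, h, hsa ▸ htb0⟩
      have hsg : CAsg sa ta = 1 := by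
        rw [CAsg, if_neg hw]
      rw [hint, hW2, hsg, CAW1, hrh]
      constructor
      · exact fun h => ⟨not_le.mp h, htb1⟩
      · exact fun h => not_le.mpr h.1
  · -- b contains 0, a does not
    have hsa : sa ≤ ta := by
      rcases not_or.mp hca with ⟨-, h⟩; exact not_lt.mp h
    have hW2 : CAW2 sa ta sb tb ↔ tb < sa := by
      constructor
      · rintro (⟨-, -, h⟩ | ⟨hnb, -⟩)
        · exact h
        · exact absurd hcb hnb
      · exact fun h => Or.inl ⟨hcb, hca, h⟩
    have hrh : CArh sb tb = CAsg sb tb := by rw [CArh, if_pos hcb]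
    by_cases hw : tb < sb
    · have hint : CAInter sa ta sb tb ↔ (sa ≤ tb ∨ sb ≤ ta) := by
        constructor
        · rintro (⟨-, h, -⟩ | ⟨h, -⟩ | ⟨-, -, h⟩ | ⟨h, -⟩)
          · exact absurd h (not_le.mpr hw)
          · exact absurd h (not_lt.mpr hsa)
          · exact h
          · exact absurd h (not_lt.mpr hsa)
        · exact fun h => Or.inr (Or.inr (Or.inl ⟨hsa, hw, h⟩))
      have hsg : CAsg sb tb = sb := by rw [CAsg, if_pos hw]
      rw [hint, hW2, CAW1, hrh, hsg]
      push_neg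
      tauto
    · have hsb0 : sb = 0 := by
        rcases hcb with h | h
        · exact h
        · exact absurd h hw
      have hint : CAInter sa ta sb tb ↔ sa ≤ tb := by
        constructor
        · rintro (⟨-, -, -, h⟩ | ⟨h, -⟩ | ⟨-, h, -⟩ | ⟨-, h⟩)
          · exact h
          · exact absurd h (not_lt.mpr hsa)
          · exact absurd h hw
          · exact absurd h hw
        · exact fun h => Or.inl ⟨hsa, not_lt.mp hw, hsb0 ▸ hta0, h⟩
      have hsg : CAsg sb tb = 1 := by rw [CAsg, if_neg hw]
      rw [hint, hW2, CAW1, hrh, hsg]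
      constructor
      · exact fun h => ⟨hta1, not_le.mp h⟩
      · exact fun h => not_le.mpr h.2
  · -- neither contains 0
    have hsa : sa ≤ ta := by
      rcases not_or.mp hca with ⟨-, h⟩; exact not_lt.mp h
    have hsb : sb ≤ tb := by
      rcases not_or.mp hcb with ⟨-, h⟩; exact not_lt.mp h
    obtain ⟨hda1, hda2⟩ := hda.resolve_left hca
    obtain ⟨hdb1, hdb2⟩ := hdb.resolve_left hcb
    have hstb : sa ≤ tb := by linarith
    have hint : CAInter sa ta sb tb ↔ sb ≤ ta := by
      constructor
      · rintro (⟨-, -, h, -⟩ | ⟨h, -⟩ | ⟨-, h, -⟩ | ⟨h, -⟩)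
        · exact h
        · exact absurd h (not_lt.mpr hsa)
        · exact absurd h (not_lt.mpr hsb)
        · exact absurd h (not_lt.mpr hsa)
      · exact fun h => Or.inl ⟨hsa, hsb, h, hstb⟩
    have hrh : CArh sb tb = sb := by rw [CArh, if_neg hcb]
    have hsg : CAsg sa ta = 1 := by
      rw [CAsg, if_neg (not_lt.mpr hsa)]
    rw [hint, CAW1, hrh]
    constructor
    · exact fun h => ⟨not_le.mp h, Or.inr ⟨hcb, hsg ▸ htb1⟩⟩
    · exact fun h => not_le.mpr h.1


lemma ca_main_core {V : Type*} (s t : V → ℝ) (X Y : Set V)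
    (hs : ∀ v, s v ∈ Set.Ico (0:ℝ) 1) (ht : ∀ v, t v ∈ Set.Ico (0:ℝ) 1)
    (dX dY : ℝ) (hd : dX ≤ dY)
    (hX : ∀ x ∈ X, CAct (s x) (t x) ∨ (s x ≤ dX ∧ dX ≤ t x))
    (hY : ∀ y ∈ Y, CAct (s y) (t y) ∨ (s y ≤ dY ∧ dY ≤ t y)) :
    ∃ F₁ F₂ : X → Y → Prop, IsFerrers F₁ ∧ IsFerrers F₂ ∧
      ∀ (x : X) (y : Y), (¬ CAInter (s x) (t x) (s y) (t y)) ↔ F₁ x y ∧ F₂ x y := by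
  refine ⟨fun x y => CAW1 (t (x:V)) (s (y:V)) (t (y:V)),
          fun x y => CAW2 (s (x:V)) (t (x:V)) (s (y:V)) (t (y:V)), ?_, ?_, ?_⟩
  · exact fun x x' y y' h h' => caW1_ferrers h h'
  · exact fun x x' y y' h h' => caW2_ferrers (ht (y:V)).2 (ht (y':V)).2 h h'
  · intro x y
    exact ca_factor (ht (x:V)).1 (ht (x:V)).2 (ht (y:V)).1 (ht (y:V)).2
      (hX x x.2) (hY y y.2) hd

lemma ferrers_to_nat {A B : Type*} [Fintype A] [Fintype B] (F : A → B → Prop)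
    (hF : IsFerrers F) :
    ∃ (φ : A → ℕ) (ψ : B → ℕ), (∀ a, φ a ≤ Fintype.card A + 1) ∧
      (∀ b, ψ b ≤ Fintype.card A) ∧ ∀ a b, F a b ↔ φ a ≤ ψ b := by
  classical
  set col : B → Finset A := fun b => Finset.univ.filter (fun a => F a b) with hcol
  have hmemcol : ∀ a b, a ∈ col b ↔ F a b := by
    intro a b; simp [hcol]
  have hchain : ∀ b b', col b ⊆ col b' ∨ col b' ⊆ col b := by
    intro b b'
    by_contra hc
    push_neg at hc
    obtain ⟨h1, h2⟩ := hc
    obtain ⟨a, ha, hna⟩ := Finset.not_subset.mp h1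
    obtain ⟨a', ha', hna'⟩ := Finset.not_subset.mp h2
    rcases hF a a' b b' ((hmemcol a b).mp ha) ((hmemcol a' b').mp ha') with h | h
    · exact hna ((hmemcol a b').mpr h)
    · exact hna' ((hmemcol a' b).mpr h)
  set ψ : B → ℕ := fun b => (col b).card with hψ
  have hψle : ∀ b, ψ b ≤ Fintype.card A := fun b => Finset.card_filter_le _ _
  set Sa : A → Finset B := fun a => Finset.univ.filter (fun b => F a b) with hSa
  have hmemSa : ∀ a b, b ∈ Sa a ↔ F a b := by intro a b; simp [hSa]
  refine ⟨fun a => if h : (Sa a).Nonempty then (Sa a).inf' h ψ else Fintype.card A + 1,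
    ψ, ?_, hψle, ?_⟩
  · intro a
    by_cases h : (Sa a).Nonempty
    · simp only [dif_pos h]
      obtain ⟨b, hb⟩ := h
      exact le_trans (Finset.inf'_le _ hb) (le_trans (hψle b) (Nat.le_succ _))
    · simp only [dif_neg h]
      exact le_refl _
  · intro a b
    constructor
    · intro hab
      have hb : b ∈ Sa a := (hmemSa a b).mpr hab
      have hne : (Sa a).Nonempty := ⟨b, hb⟩
      simp only [dif_pos hne]
      exact Finset.inf'_le _ hb
    · intro hle
      by_cases h : (Sa a).Nonempty
      · simp only [dif_pos h] at hle
        obtain ⟨b₀, hb₀, heq⟩ := Finset.exists_mem_eq_inf' h ψ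
        rw [heq] at hle
        have hF₀ : F a b₀ := (hmemSa a b₀).mp hb₀
        rcases hchain b₀ b with hsub | hsub
        · exact (hmemcol a b).mp (hsub ((hmemcol a b₀).mpr hF₀))
        · have : col b = col b₀ := Finset.eq_of_subset_of_card_le hsub hle
          exact (hmemcol a b).mp (this ▸ (hmemcol a b₀).mpr hF₀)
      · simp only [dif_neg h] at hle
        exact absurd (le_trans hle (hψle b)) (by omega)

lemma caInter_comm {sa ta sb tb : ℝ} : CAInter sa ta sb tb ↔ CAInter sb tb sa ta := by
  unfold CAInter; tauto

lemma caInter_wrap_normal {sa ta sb tb : ℝ} (hw : ta < sa) (hb : sb ≤ tb) :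
    CAInter sa ta sb tb ↔ (sb ≤ ta ∨ sa ≤ tb) := by
  constructor
  · rintro (⟨h, -⟩ | ⟨-, -, h⟩ | ⟨-, h, -⟩ | ⟨-, h⟩)
    · exact absurd h (not_le.mpr hw)
    · exact h
    · exact absurd h (not_lt.mpr hb)
    · exact absurd h (not_lt.mpr hb)
  · exact fun h => Or.inr (Or.inl ⟨hw, hb, h⟩)



theorem two_clique_circular_arc_iff_bipartite_complement_ferrers_dim_le_two
    {V : Type*} [Fintype V] (G : SimpleGraph V) (X Y : Set V)
    (hunion : X ∪ Y = Set.univ) (hdisj : Disjoint X Y)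
    (hX : G.IsClique X) (hY : G.IsClique Y) :
    IsCircularArcGraph G ↔
      ∃ F₁ F₂ : X → Y → Prop, IsFerrers F₁ ∧ IsFerrers F₂ ∧
        ∀ (x : X) (y : Y), (¬ G.Adj (x : V) (y : V)) ↔ F₁ x y ∧ F₂ x y := by
  classical
  constructor
  · rintro ⟨s, t, hs, ht, hadj⟩
    have hAI : ∀ u v : V, u ≠ v → (G.Adj u v ↔ CAInter (s u) (t u) (s v) (t v)) := by
      intro u v hne
      exact (hadj u v hne).trans (caInter_iff (hs u).1 (hs u).2 (ht u).1 (ht u).2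
        (hs v).1 (hs v).2 (ht v).1 (ht v).2)
    have hintC : ∀ (S : Set V), G.IsClique S → ∀ u v, u ∈ S → v ∈ S →
        CAInter (s u) (t u) (s v) (t v) := by
      intro S hS u v hu hv
      by_cases h : u = v
      · subst h; exact caInter_self
      · exact (hAI u v h).mp (hS hu hv h)
    have helly : ∀ (S : Set V), (∀ u v, u ∈ S → v ∈ S → CAInter (s u) (t u) (s v) (t v)) →
        (∀ v ∈ S, ¬ CAct (s v) (t v)) → S.Nonempty →
        ∃ d, ∀ v ∈ S, s v ≤ d ∧ d ≤ t v := by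
      intro S hint hnc hne
      obtain ⟨m, hm, hmax⟩ := Set.exists_max_image S s (Set.toFinite S) hne
      refine ⟨s m, fun v hv => ⟨hmax v hv, ?_⟩⟩
      exact (caInter_normal (hint m v hm hv)
        ((not_or.mp (hnc m hm)).2) ((not_or.mp (hnc v hv)).2)).2
    have main : ∀ dX dY : ℝ, dX ≤ dY →
        (∀ x ∈ X, CAct (s x) (t x) ∨ (s x ≤ dX ∧ dX ≤ t x)) →
        (∀ y ∈ Y, CAct (s y) (t y) ∨ (s y ≤ dY ∧ dY ≤ t y)) →
        ∃ F₁ F₂ : X → Y → Prop, IsFerrers F₁ ∧ IsFerrers F₂ ∧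
          ∀ (x : X) (y : Y), (¬ G.Adj (x : V) (y : V)) ↔ F₁ x y ∧ F₂ x y := by
      intro dX dY hd h1 h2
      obtain ⟨F₁, F₂, hf1, hf2, hfac⟩ := ca_main_core s t X Y hs ht dX dY hd h1 h2
      refine ⟨F₁, F₂, hf1, hf2, fun x y => ?_⟩
      have hne : (x : V) ≠ (y : V) := by
        intro h
        exact Set.disjoint_left.mp hdisj x.2 (h ▸ y.2)
      exact (not_congr (hAI x y hne)).trans (hfac x y)
    have mainSwap : ∀ dY dX : ℝ, dY ≤ dX →
        (∀ y ∈ Y, CAct (s y) (t y) ∨ (s y ≤ dY ∧ dY ≤ t y)) →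
        (∀ x ∈ X, CAct (s x) (t x) ∨ (s x ≤ dX ∧ dX ≤ t x)) →
        ∃ F₁ F₂ : X → Y → Prop, IsFerrers F₁ ∧ IsFerrers F₂ ∧
          ∀ (x : X) (y : Y), (¬ G.Adj (x : V) (y : V)) ↔ F₁ x y ∧ F₂ x y := by
      intro dY dX hd h1 h2
      obtain ⟨G₁, G₂, hg1, hg2, hfac⟩ := ca_main_core s t Y X hs ht dY dX hd h1 h2
      refine ⟨fun x y => G₁ y x, fun x y => G₂ y x, ?_, ?_, fun x y => ?_⟩
      · exact fun x x' y y' h h' => (hg1 y y' x x' h h').symm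
      · exact fun x x' y y' h h' => (hg2 y y' x x' h h').symm
      · have hne : (y : V) ≠ (x : V) := by
          intro h
          exact Set.disjoint_left.mp hdisj x.2 (h ▸ y.2)
        have hcomm : (¬ G.Adj (x : V) (y : V)) ↔ (¬ G.Adj (y : V) (x : V)) := by
          rw [G.adj_comm]
        exact hcomm.trans ((not_congr (hAI y x hne)).trans (hfac y x))
    set SX : Set V := {v | v ∈ X ∧ ¬ CAct (s v) (t v)} with hSXdef
    set SY : Set V := {v | v ∈ Y ∧ ¬ CAct (s v) (t v)} with hSYdef
    have hintSX : ∀ u v, u ∈ SX → v ∈ SX → CAInter (s u) (t u) (s v) (t v) :=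
      fun u v hu hv => hintC X hX u v hu.1 hv.1
    have hintSY : ∀ u v, u ∈ SY → v ∈ SY → CAInter (s u) (t u) (s v) (t v) :=
      fun u v hu hv => hintC Y hY u v hu.1 hv.1
    by_cases hSX : SX.Nonempty <;> by_cases hSY : SY.Nonempty
    · obtain ⟨dX, hdX⟩ := helly SX hintSX (fun v hv => hv.2) hSX
      obtain ⟨dY, hdY⟩ := helly SY hintSY (fun v hv => hv.2) hSY
      rcases le_total dX dY with hle | hle
      · refine main dX dY hle ?_ ?_
        · intro x hx
          by_cases h : CAct (s x) (t x)
          · exact Or.inl h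
          · exact Or.inr (hdX x ⟨hx, h⟩)
        · intro y hy
          by_cases h : CAct (s y) (t y)
          · exact Or.inl h
          · exact Or.inr (hdY y ⟨hy, h⟩)
      · refine mainSwap dY dX hle ?_ ?_
        · intro y hy
          by_cases h : CAct (s y) (t y)
          · exact Or.inl h
          · exact Or.inr (hdY y ⟨hy, h⟩)
        · intro x hx
          by_cases h : CAct (s x) (t x)
          · exact Or.inl h
          · exact Or.inr (hdX x ⟨hx, h⟩)
    · obtain ⟨dX, hdX⟩ := helly SX hintSX (fun v hv => hv.2) hSX
      refine main dX dX le_rfl ?_ ?_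
      · intro x hx
        by_cases h : CAct (s x) (t x)
        · exact Or.inl h
        · exact Or.inr (hdX x ⟨hx, h⟩)
      · intro y hy
        by_contra hcon
        push_neg at hcon
        exact hSY ⟨y, hy, fun h => hcon.1 h⟩
    · obtain ⟨dY, hdY⟩ := helly SY hintSY (fun v hv => hv.2) hSY
      refine main dY dY le_rfl ?_ ?_
      · intro x hx
        by_contra hcon
        push_neg at hcon
        exact hSX ⟨x, hx, fun h => hcon.1 h⟩
      · intro y hy
        by_cases h : CAct (s y) (t y)
        · exact Or.inl h
        · exact Or.inr (hdY y ⟨hy, h⟩)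
    · refine main 0 0 le_rfl ?_ ?_
      · intro x hx
        by_contra hcon
        push_neg at hcon
        exact hSX ⟨x, hx, fun h => hcon.1 h⟩
      · intro y hy
        by_contra hcon
        push_neg at hcon
        exact hSY ⟨y, hy, fun h => hcon.1 h⟩
  · rintro ⟨F₁, F₂, hF₁, hF₂, hiff⟩
    haveI : Fintype X := (Set.toFinite X).fintype
    haveI : Fintype Y := (Set.toFinite Y).fintype
    obtain ⟨φ₁, ψ₁, hφ₁b, hψ₁b, h1⟩ := ferrers_to_nat F₁ hF₁
    obtain ⟨φ₂, ψ₂, hφ₂b, hψ₂b, h2⟩ := ferrers_to_nat F₂ hF₂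
    set M : ℕ := Fintype.card X + 2 with hMdef
    have hM2 : (2 : ℝ) ≤ (M : ℝ) := by
      have : 2 ≤ M := by omega
      exact_mod_cast this
    have hM0 : (0 : ℝ) < 4 * (M : ℝ) := by linarith
    have hmemY : ∀ v, v ∉ X → v ∈ Y := by
      intro v hv
      have : v ∈ X ∪ Y := hunion ▸ Set.mem_univ v
      exact this.resolve_left hv
    have hφub : ∀ (x : X), (2 * (φ₁ x : ℝ) + 1) < 2 * M ∧ (2 * (φ₂ x : ℝ) + 1) < 2 * M := by
      intro x
      have b1 := hφ₁b x
      have b2 := hφ₂b x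
      have c1 : (φ₁ x : ℝ) ≤ (M : ℝ) - 1 := by
        have : φ₁ x ≤ M - 1 := by omega
        have h' : ((M : ℕ) - 1 : ℕ) = Fintype.card X + 1 := by omega
        rw [h'] at this
        have := (Nat.cast_le (α := ℝ)).mpr this
        push_cast at this ⊢
        have hMc : ((Fintype.card X : ℝ) + 1) = (M : ℝ) - 1 := by
          rw [hMdef]; push_cast; ring
        linarith [hMc ▸ this]
      have c2 : (φ₂ x : ℝ) ≤ (M : ℝ) - 1 := by
        have : φ₂ x ≤ Fintype.card X + 1 := b2
        have := (Nat.cast_le (α := ℝ)).mpr this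
        push_cast at this
        have hMc : ((Fintype.card X : ℝ) + 1) = (M : ℝ) - 1 := by
          rw [hMdef]; push_cast; ring
        linarith
      constructor <;> linarith
    have hψub : ∀ (y : Y), (2 * (ψ₁ y : ℝ) + 2) < 2 * M ∧ (2 * (ψ₂ y : ℝ) + 2) < 2 * M := by
      intro y
      have b1 := hψ₁b y
      have b2 := hψ₂b y
      have c1 : (ψ₁ y : ℝ) ≤ (M : ℝ) - 2 := by
        have := (Nat.cast_le (α := ℝ)).mpr b1
        have hMc : (Fintype.card X : ℝ) = (M : ℝ) - 2 := by
          rw [hMdef]; push_cast; ring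
        linarith
      have c2 : (ψ₂ y : ℝ) ≤ (M : ℝ) - 2 := by
        have := (Nat.cast_le (α := ℝ)).mpr b2
        have hMc : (Fintype.card X : ℝ) = (M : ℝ) - 2 := by
          rw [hMdef]; push_cast; ring
        linarith
      constructor <;> linarith
    set sf : V → ℝ := fun v =>
      if h : v ∈ X then 1 - (2 * (φ₂ ⟨v, h⟩ : ℝ) + 1) / (4 * M)
      else (2 * (ψ₁ ⟨v, hmemY v h⟩ : ℝ) + 2) / (4 * M) with hsf
    set tf : V → ℝ := fun v =>
      if h : v ∈ X then (2 * (φ₁ ⟨v, h⟩ : ℝ) + 1) / (4 * M)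
      else 1 - (2 * (ψ₂ ⟨v, hmemY v h⟩ : ℝ) + 2) / (4 * M) with htf
    have hsX : ∀ v (h : v ∈ X), sf v = 1 - (2 * (φ₂ ⟨v, h⟩ : ℝ) + 1) / (4 * M) := by
      intro v h; simp only [hsf, dif_pos h]
    have htX : ∀ v (h : v ∈ X), tf v = (2 * (φ₁ ⟨v, h⟩ : ℝ) + 1) / (4 * M) := by
      intro v h; simp only [htf, dif_pos h]
    have hsY : ∀ v (h : v ∉ X), sf v = (2 * (ψ₁ ⟨v, hmemY v h⟩ : ℝ) + 2) / (4 * M) := by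
      intro v h; simp only [hsf, dif_neg h]
    have htY : ∀ v (h : v ∉ X), tf v = 1 - (2 * (ψ₂ ⟨v, hmemY v h⟩ : ℝ) + 2) / (4 * M) := by
      intro v h; simp only [htf, dif_neg h]
    -- placement bounds
    have hXwrap : ∀ v (h : v ∈ X), 0 < tf v ∧ tf v < 1/2 ∧ 1/2 < sf v ∧ sf v < 1 := by
      intro v h
      rw [hsX v h, htX v h]
      obtain ⟨u1, u2⟩ := hφub ⟨v, h⟩
      have p1 : (0 : ℝ) < 2 * (φ₁ ⟨v, h⟩ : ℝ) + 1 := by positivity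
      have p2 : (0 : ℝ) < 2 * (φ₂ ⟨v, h⟩ : ℝ) + 1 := by positivity
      have q1 : (2 * (φ₁ ⟨v, h⟩ : ℝ) + 1) / (4 * M) < 1/2 := by
        rw [div_lt_iff₀ hM0]; linarith
      have q2 : (2 * (φ₂ ⟨v, h⟩ : ℝ) + 1) / (4 * M) < 1/2 := by
        rw [div_lt_iff₀ hM0]; linarith
      have q3 : (0 : ℝ) < (2 * (φ₁ ⟨v, h⟩ : ℝ) + 1) / (4 * M) := by positivity
      have q4 : (0 : ℝ) < (2 * (φ₂ ⟨v, h⟩ : ℝ) + 1) / (4 * M) := by positivity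
      refine ⟨q3, q1, by linarith, by linarith⟩
    have hYnorm : ∀ v (h : v ∉ X), 0 < sf v ∧ sf v < 1/2 ∧ 1/2 < tf v ∧ tf v < 1 := by
      intro v h
      rw [hsY v h, htY v h]
      obtain ⟨u1, u2⟩ := hψub ⟨v, hmemY v h⟩
      have q1 : (2 * (ψ₁ ⟨v, hmemY v h⟩ : ℝ) + 2) / (4 * M) < 1/2 := by
        rw [div_lt_iff₀ hM0]; linarith
      have q2 : (2 * (ψ₂ ⟨v, hmemY v h⟩ : ℝ) + 2) / (4 * M) < 1/2 := by
        rw [div_lt_iff₀ hM0]; linarith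
      have q3 : (0 : ℝ) < (2 * (ψ₁ ⟨v, hmemY v h⟩ : ℝ) + 2) / (4 * M) := by positivity
      have q4 : (0 : ℝ) < (2 * (ψ₂ ⟨v, hmemY v h⟩ : ℝ) + 2) / (4 * M) := by positivity
      refine ⟨q3, q1, by linarith, by linarith⟩
    have hsIco : ∀ v, sf v ∈ Set.Ico (0:ℝ) 1 := by
      intro v
      by_cases h : v ∈ X
      · obtain ⟨a, b, c, d⟩ := hXwrap v h
        exact ⟨by linarith, d⟩
      · obtain ⟨a, b, c, d⟩ := hYnorm v h
        exact ⟨le_of_lt a, by linarith⟩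
    have htIco : ∀ v, tf v ∈ Set.Ico (0:ℝ) 1 := by
      intro v
      by_cases h : v ∈ X
      · obtain ⟨a, b, c, d⟩ := hXwrap v h
        exact ⟨le_of_lt a, by linarith⟩
      · obtain ⟨a, b, c, d⟩ := hYnorm v h
        exact ⟨by linarith, d⟩
    refine ⟨sf, tf, hsIco, htIco, ?_⟩
    intro u v hne
    rw [caInter_iff (hsIco u).1 (hsIco u).2 (htIco u).1 (htIco u).2
      (hsIco v).1 (hsIco v).2 (htIco v).1 (htIco v).2]
    -- key numeric equivalences for a cross pair (x ∈ X, y ∉ X)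
    have key : ∀ (xv yv : V) (hx : xv ∈ X) (hy : yv ∉ X),
        CAInter (sf xv) (tf xv) (sf yv) (tf yv) ↔
          (ψ₁ ⟨yv, hmemY yv hy⟩ < φ₁ ⟨xv, hx⟩ ∨ ψ₂ ⟨yv, hmemY yv hy⟩ < φ₂ ⟨xv, hx⟩) := by
      intro xv yv hx hy
      obtain ⟨a1, a2, a3, a4⟩ := hXwrap xv hx
      obtain ⟨b1, b2, b3, b4⟩ := hYnorm yv hy
      rw [caInter_wrap_normal (by linarith) (by linarith)]
      have e1 : sf yv ≤ tf xv ↔ ψ₁ ⟨yv, hmemY yv hy⟩ < φ₁ ⟨xv, hx⟩ := by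
        rw [hsY yv hy, htX xv hx, div_le_div_iff₀ hM0 hM0, mul_le_mul_iff_of_pos_right hM0]
        constructor
        · intro h
          have : 2 * ψ₁ ⟨yv, hmemY yv hy⟩ + 2 ≤ 2 * φ₁ ⟨xv, hx⟩ + 1 := by exact_mod_cast h
          omega
        · intro h
          have : 2 * ψ₁ ⟨yv, hmemY yv hy⟩ + 2 ≤ 2 * φ₁ ⟨xv, hx⟩ + 1 := by omega
          exact_mod_cast this
      have e2 : sf xv ≤ tf yv ↔ ψ₂ ⟨yv, hmemY yv hy⟩ < φ₂ ⟨xv, hx⟩ := by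
        rw [hsX xv hx, htY yv hy]
        have : 1 - (2 * (φ₂ ⟨xv, hx⟩ : ℝ) + 1) / (4 * M) ≤
            1 - (2 * (ψ₂ ⟨yv, hmemY yv hy⟩ : ℝ) + 2) / (4 * M) ↔
            (2 * (ψ₂ ⟨yv, hmemY yv hy⟩ : ℝ) + 2) / (4 * M) ≤
            (2 * (φ₂ ⟨xv, hx⟩ : ℝ) + 1) / (4 * M) := by
          constructor <;> intro h <;> linarith
        rw [this, div_le_div_iff₀ hM0 hM0, mul_le_mul_iff_of_pos_right hM0]
        constructor
        · intro h
          have : 2 * ψ₂ ⟨yv, hmemY yv hy⟩ + 2 ≤ 2 * φ₂ ⟨xv, hx⟩ + 1 := by exact_mod_cast h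
          omega
        · intro h
          have : 2 * ψ₂ ⟨yv, hmemY yv hy⟩ + 2 ≤ 2 * φ₂ ⟨xv, hx⟩ + 1 := by omega
          exact_mod_cast this
      rw [e1, e2]
    have adjiff : ∀ (xv yv : V) (hx : xv ∈ X) (hy : yv ∉ X),
        G.Adj xv yv ↔ (ψ₁ ⟨yv, hmemY yv hy⟩ < φ₁ ⟨xv, hx⟩ ∨ ψ₂ ⟨yv, hmemY yv hy⟩ < φ₂ ⟨xv, hx⟩) := by
      intro xv yv hx hy
      have hni := hiff ⟨xv, hx⟩ ⟨yv, hmemY yv hy⟩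
      rw [h1, h2] at hni
      constructor
      · intro hadj'
        by_contra hcon
        push_neg at hcon
        exact hni.mpr ⟨hcon.1, hcon.2⟩ hadj'
      · intro h
        by_contra hnadj
        obtain ⟨c1, c2⟩ := hni.mp hnadj
        rcases h with h | h <;> omega
    by_cases hu : u ∈ X <;> by_cases hv : v ∈ X
    · -- both in X : adjacent, arcs both wrap
      obtain ⟨a1, a2, a3, a4⟩ := hXwrap u hu
      obtain ⟨b1, b2, b3, b4⟩ := hXwrap v hv
      exact iff_of_true (hX hu hv hne) (Or.inr (Or.inr (Or.inr ⟨by linarith, by linarith⟩)))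
    · rw [key u v hu hv]
      exact adjiff u v hu hv
    · rw [caInter_comm, key v u hv hu]
      rw [G.adj_comm]
      exact adjiff v u hv hu
    · -- both in Y
      obtain ⟨a1, a2, a3, a4⟩ := hYnorm u hu
      obtain ⟨b1, b2, b3, b4⟩ := hYnorm v hv
      exact iff_of_true (hY (hmemY u hu) (hmemY v hv) hne)
        (Or.inl ⟨by linarith, by linarith, by linarith, by linarith⟩)
end

section
/- For a finite simple graph G = (V, E) the following are equivalent: (i) G is a co-TT graph (the complement of a threshold tolerance graph); (ii) G is a signed interval graph, i.e., there exist functions l, r : V → ℝ such that for all distinct vertices u and v: u is adjacent to v if and only if l u ≤ r v and l v ≤ r u. -/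
/-- `G` is a signed interval graph: each vertex `v` gets a (possibly negative) interval
`(l v, r v)`, and distinct vertices `u`, `v` are adjacent iff `l u ≤ r v` and `l v ≤ r u`. -/
def IsSignedIntervalGraph {V : Type*} (G : SimpleGraph V) : Prop :=
  ∃ l r : V → ℝ, ∀ u v : V, u ≠ v → (G.Adj u v ↔ l u ≤ r v ∧ l v ≤ r u)

theorem coTT_iff_signed_interval_graph
    {V : Type*} [Fintype V] (G : SimpleGraph V) :
    IsCoTT G ↔ IsSignedIntervalGraph G := by
  constructor
  · rintro ⟨w, t, hw, ht, h⟩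
    refine ⟨w, fun v => t v - w v, fun u v huv => ?_⟩
    have h2 := h u v huv
    rw [SimpleGraph.compl_adj, and_iff_right huv] at h2
    have key : G.Adj u v ↔ ¬ (w u + w v > min (t u) (t v)) := by
      rw [← h2, not_not]
    rw [key, not_lt, le_min_iff]
    constructor <;> rintro ⟨h1, h3⟩ <;> dsimp only at * <;> constructor <;> linarith
  · rintro ⟨l, r, h⟩
    set C : ℝ := 1 + ∑ v, (|l v| + |r v|) with hC
    have hsum : ∀ v, |l v| + |r v| ≤ ∑ v, (|l v| + |r v|) :=
      fun v => Finset.single_le_sum (f := fun v => |l v| + |r v|) (fun i _ => by positivity) (Finset.mem_univ v)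
    refine ⟨fun v => l v + C, fun v => l v + r v + 2 * C, ?_, ?_, ?_⟩
    · intro v
      have h1 := hsum v
      have h2 := neg_abs_le (l v)
      have h3 := abs_nonneg (r v)
      simp only [hC]
      linarith
    · intro v
      have h1 := hsum v
      have h2 := neg_abs_le (l v)
      have h3 := neg_abs_le (r v)
      have h4 := abs_nonneg (l v)
      have h5 := abs_nonneg (r v)
      simp only [hC]
      linarith
    · intro u v huv
      rw [SimpleGraph.compl_adj, and_iff_right huv]
      rw [h u v huv, gt_iff_lt, min_lt_iff, not_and_or, not_le, not_le]
      dsimp only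
      constructor
      · rintro (h1 | h1)
        · right; linarith
        · left; linarith
      · rintro (h1 | h1)
        · right; linarith
        · left; linarith
end

section
/- The tree T on seven vertices {s, u, v, w, x, y, z} with edge set {su, sv, sw, ux, vy, wz} (a spider with three legs of length two) admits no signed interval representation; consequently T is a forbidden induced subgraph for co-TT graphs. -/
/-- The tree `T` on seven vertices: `0 = s`, `1 = u`, `2 = v`, `3 = w`, `4 = x`,
`5 = y`, `6 = z`, with edges `su`, `sv`, `sw`, `ux`, `vy`, `wz` (a spider with three
legs of length two). -/
def spiderT : SimpleGraph (Fin 7) :=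
  SimpleGraph.fromEdgeSet
    {s(0, 1), s(0, 2), s(0, 3), s(1, 4), s(2, 5), s(3, 6)}

theorem spiderT_not_signed_interval : ¬ IsSignedIntervalGraph spiderT := by
  rintro ⟨l, r, h⟩
  -- adjacent pairs
  have a01 : spiderT.Adj 0 1 := by
    simp [spiderT, SimpleGraph.fromEdgeSet_adj, Set.mem_insert_iff, Sym2.eq_iff]
  have a02 : spiderT.Adj 0 2 := by
    simp [spiderT, SimpleGraph.fromEdgeSet_adj, Set.mem_insert_iff, Sym2.eq_iff]
  have a03 : spiderT.Adj 0 3 := by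
    simp [spiderT, SimpleGraph.fromEdgeSet_adj, Set.mem_insert_iff, Sym2.eq_iff]
  have a14 : spiderT.Adj 1 4 := by
    simp [spiderT, SimpleGraph.fromEdgeSet_adj, Set.mem_insert_iff, Sym2.eq_iff]
  have a25 : spiderT.Adj 2 5 := by
    simp [spiderT, SimpleGraph.fromEdgeSet_adj, Set.mem_insert_iff, Sym2.eq_iff]
  have a36 : spiderT.Adj 3 6 := by
    simp [spiderT, SimpleGraph.fromEdgeSet_adj, Set.mem_insert_iff, Sym2.eq_iff]
  -- nonadjacent pairs
  have n12 : ¬ spiderT.Adj 1 2 := by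
    simp [spiderT, SimpleGraph.fromEdgeSet_adj, Set.mem_insert_iff, Sym2.eq_iff]
  have n13 : ¬ spiderT.Adj 1 3 := by
    simp [spiderT, SimpleGraph.fromEdgeSet_adj, Set.mem_insert_iff, Sym2.eq_iff]
  have n23 : ¬ spiderT.Adj 2 3 := by
    simp [spiderT, SimpleGraph.fromEdgeSet_adj, Set.mem_insert_iff, Sym2.eq_iff]
  have n04 : ¬ spiderT.Adj 0 4 := by
    simp [spiderT, SimpleGraph.fromEdgeSet_adj, Set.mem_insert_iff, Sym2.eq_iff]
  have n05 : ¬ spiderT.Adj 0 5 := by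
    simp [spiderT, SimpleGraph.fromEdgeSet_adj, Set.mem_insert_iff, Sym2.eq_iff]
  have n06 : ¬ spiderT.Adj 0 6 := by
    simp [spiderT, SimpleGraph.fromEdgeSet_adj, Set.mem_insert_iff, Sym2.eq_iff]
  -- translate to interval conditions
  have h01 := (h 0 1 (by decide)).mp a01
  have h02 := (h 0 2 (by decide)).mp a02
  have h03 := (h 0 3 (by decide)).mp a03
  have h14 := (h 1 4 (by decide)).mp a14
  have h25 := (h 2 5 (by decide)).mp a25
  have h36 := (h 3 6 (by decide)).mp a36
  have h12 : r 2 < l 1 ∨ r 1 < l 2 := by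
    have := (h 1 2 (by decide)).not.mp n12
    rcases not_and_or.mp this with hh | hh
    · exact Or.inl (lt_of_not_ge hh)
    · exact Or.inr (lt_of_not_ge hh)
  have h13 : r 3 < l 1 ∨ r 1 < l 3 := by
    have := (h 1 3 (by decide)).not.mp n13
    rcases not_and_or.mp this with hh | hh
    · exact Or.inl (lt_of_not_ge hh)
    · exact Or.inr (lt_of_not_ge hh)
  have h23 : r 3 < l 2 ∨ r 2 < l 3 := by
    have := (h 2 3 (by decide)).not.mp n23
    rcases not_and_or.mp this with hh | hh
    · exact Or.inl (lt_of_not_ge hh)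
    · exact Or.inr (lt_of_not_ge hh)
  have h04 : r 4 < l 0 ∨ r 0 < l 4 := by
    have := (h 0 4 (by decide)).not.mp n04
    rcases not_and_or.mp this with hh | hh
    · exact Or.inl (lt_of_not_ge hh)
    · exact Or.inr (lt_of_not_ge hh)
  have h05 : r 5 < l 0 ∨ r 0 < l 5 := by
    have := (h 0 5 (by decide)).not.mp n05
    rcases not_and_or.mp this with hh | hh
    · exact Or.inl (lt_of_not_ge hh)
    · exact Or.inr (lt_of_not_ge hh)
  have h06 : r 6 < l 0 ∨ r 0 < l 6 := by
    have := (h 0 6 (by decide)).not.mp n06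
    rcases not_and_or.mp this with hh | hh
    · exact Or.inl (lt_of_not_ge hh)
    · exact Or.inr (lt_of_not_ge hh)
  obtain ⟨h01a, h01b⟩ := h01
  obtain ⟨h02a, h02b⟩ := h02
  obtain ⟨h03a, h03b⟩ := h03
  obtain ⟨h14a, h14b⟩ := h14
  obtain ⟨h25a, h25b⟩ := h25
  obtain ⟨h36a, h36b⟩ := h36
  -- u, v, w have bounded intervals
  have bu : l 1 ≤ r 1 := by rcases h04 with hh | hh <;> linarith
  have bv : l 2 ≤ r 2 := by rcases h05 with hh | hh <;> linarith
  have bw : l 3 ≤ r 3 := by rcases h06 with hh | hh <;> linarith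
  rcases h12 with h12 | h12 <;> rcases h13 with h13 | h13 <;>
    rcases h23 with h23 | h23 <;>
    rcases h04 with h04 | h04 <;> rcases h05 with h05 | h05 <;>
    rcases h06 with h06 | h06 <;> linarith
end

section
/- The graph T₀ on nine vertices {u, v, w, x, y, z, s, p, q}, consisting of a triangle on {u, v, w} together with three pendant paths u–x–s, v–y–q, and w–z–p (edge set {uv, uw, vw, ux, xs, vy, yq, wz, zp}), admits no signed interval representation; consequently T₀ is a forbidden induced subgraph for co-TT graphs. -/
/-- The graph `T₀` on nine vertices: `0 = u`, `1 = v`, `2 = w`, `3 = x`, `4 = y`,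
`5 = z`, `6 = s`, `7 = p`, `8 = q`; a triangle on `{u, v, w}` with pendant paths
`u–x–s`, `v–y–q`, `w–z–p`. -/
def graphT0 : SimpleGraph (Fin 9) :=
  SimpleGraph.fromEdgeSet
    {s(0, 1), s(0, 2), s(1, 2), s(0, 3), s(3, 6), s(1, 4), s(4, 8), s(2, 5), s(5, 7)}

set_option maxHeartbeats 2000000 in
theorem graphT0_not_signed_interval : ¬ IsSignedIntervalGraph graphT0 := by
  rintro ⟨l, r, h⟩
  -- edges
  have euv : l 0 ≤ r 1 ∧ l 1 ≤ r 0 := (h 0 1 (by decide)).mp (by simp [graphT0])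
  have euw : l 0 ≤ r 2 ∧ l 2 ≤ r 0 := (h 0 2 (by decide)).mp (by simp [graphT0])
  have evw : l 1 ≤ r 2 ∧ l 2 ≤ r 1 := (h 1 2 (by decide)).mp (by simp [graphT0])
  have eux : l 0 ≤ r 3 ∧ l 3 ≤ r 0 := (h 0 3 (by decide)).mp (by simp [graphT0])
  have exs : l 3 ≤ r 6 ∧ l 6 ≤ r 3 := (h 3 6 (by decide)).mp (by simp [graphT0])
  have evy : l 1 ≤ r 4 ∧ l 4 ≤ r 1 := (h 1 4 (by decide)).mp (by simp [graphT0])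
  have eyq : l 4 ≤ r 8 ∧ l 8 ≤ r 4 := (h 4 8 (by decide)).mp (by simp [graphT0])
  have ewz : l 2 ≤ r 5 ∧ l 5 ≤ r 2 := (h 2 5 (by decide)).mp (by simp [graphT0])
  have ezp : l 5 ≤ r 7 ∧ l 7 ≤ r 5 := (h 5 7 (by decide)).mp (by simp [graphT0])
  -- non-edges
  have nus : ¬ (l 0 ≤ r 6 ∧ l 6 ≤ r 0) := fun hc => (by simp [graphT0] : ¬ graphT0.Adj 0 6)
    ((h 0 6 (by decide)).mpr hc)
  have nvq : ¬ (l 1 ≤ r 8 ∧ l 8 ≤ r 1) := fun hc => (by simp [graphT0] : ¬ graphT0.Adj 1 8)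
    ((h 1 8 (by decide)).mpr hc)
  have nwp : ¬ (l 2 ≤ r 7 ∧ l 7 ≤ r 2) := fun hc => (by simp [graphT0] : ¬ graphT0.Adj 2 7)
    ((h 2 7 (by decide)).mpr hc)
  have nvx : ¬ (l 1 ≤ r 3 ∧ l 3 ≤ r 1) := fun hc => (by simp [graphT0] : ¬ graphT0.Adj 1 3)
    ((h 1 3 (by decide)).mpr hc)
  have nwx : ¬ (l 2 ≤ r 3 ∧ l 3 ≤ r 2) := fun hc => (by simp [graphT0] : ¬ graphT0.Adj 2 3)
    ((h 2 3 (by decide)).mpr hc)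
  have nuy : ¬ (l 0 ≤ r 4 ∧ l 4 ≤ r 0) := fun hc => (by simp [graphT0] : ¬ graphT0.Adj 0 4)
    ((h 0 4 (by decide)).mpr hc)
  have nwy : ¬ (l 2 ≤ r 4 ∧ l 4 ≤ r 2) := fun hc => (by simp [graphT0] : ¬ graphT0.Adj 2 4)
    ((h 2 4 (by decide)).mpr hc)
  have nuz : ¬ (l 0 ≤ r 5 ∧ l 5 ≤ r 0) := fun hc => (by simp [graphT0] : ¬ graphT0.Adj 0 5)
    ((h 0 5 (by decide)).mpr hc)
  have nvz : ¬ (l 1 ≤ r 5 ∧ l 5 ≤ r 1) := fun hc => (by simp [graphT0] : ¬ graphT0.Adj 1 5)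
    ((h 1 5 (by decide)).mpr hc)
  -- `x = 3` has a nonempty interval: otherwise its neighbours `u = 0` and `s = 6`
  -- would be adjacent.
  have bx : l 3 ≤ r 3 := by
    by_contra hb
    push_neg at hb
    exact nus ⟨le_trans eux.1 (le_trans hb.le exs.1), le_trans exs.2 (le_trans hb.le eux.2)⟩
  have by' : l 4 ≤ r 4 := by
    by_contra hb
    push_neg at hb
    exact nvq ⟨le_trans evy.1 (le_trans hb.le eyq.1), le_trans eyq.2 (le_trans hb.le evy.2)⟩
  have bz : l 5 ≤ r 5 := by
    by_contra hb
    push_neg at hb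
    exact nwp ⟨le_trans ewz.1 (le_trans hb.le ezp.1), le_trans ezp.2 (le_trans hb.le ewz.2)⟩
  -- turn non-adjacencies into disjunctions and case-split
  rw [not_and_or, not_le, not_le] at nvx nwx nuy nwy nuz nvz
  obtain ⟨euv1, euv2⟩ := euv; obtain ⟨euw1, euw2⟩ := euw; obtain ⟨evw1, evw2⟩ := evw
  obtain ⟨eux1, eux2⟩ := eux; obtain ⟨evy1, evy2⟩ := evy; obtain ⟨ewz1, ewz2⟩ := ewz
  rcases nvx with h1 | h1 <;> rcases nwx with h2 | h2 <;>
    rcases nuy with h3 | h3 <;> rcases nwy with h4 | h4 <;>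
    rcases nuz with h5 | h5 <;> rcases nvz with h6 | h6 <;> linarith
end

section
/- The graph P on eight vertices {u, v, w, t, x, y, z, s}, with edge set {uv, ut, vt, uw, wt, yv, wz, ux, xs} (so that {u, v, t} and {u, w, t} are triangles, y is pendant at v, z is pendant at w, and u carries the pendant path u–x–s), admits no signed interval representation; consequently P is a forbidden induced subgraph for co-TT graphs. -/
/-- The graph `P` on eight vertices: `0 = u`, `1 = v`, `2 = w`, `3 = t`, `4 = x`,
`5 = y`, `6 = z`, `7 = s`, with edges `uv`, `ut`, `vt`, `uw`, `wt`, `yv`, `wz`,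
`ux`, `xs` (so `{u, v, t}` and `{u, w, t}` are triangles, `y` is pendant at `v`,
`z` is pendant at `w`, and `u` carries the pendant path `u–x–s`). -/
def graphP : SimpleGraph (Fin 8) :=
  SimpleGraph.fromEdgeSet
    {s(0, 1), s(0, 3), s(1, 3), s(0, 2), s(2, 3), s(5, 1), s(2, 6), s(0, 4), s(4, 7)}

theorem graphP_not_signed_interval : ¬ IsSignedIntervalGraph graphP := by
  rintro ⟨l, r, h⟩
  -- edges
  have e01 : l 0 ≤ r 1 ∧ l 1 ≤ r 0 := (h 0 1 (by decide)).mp (by simp [graphP])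
  have e02 : l 0 ≤ r 2 ∧ l 2 ≤ r 0 := (h 0 2 (by decide)).mp (by simp [graphP])
  have e04 : l 0 ≤ r 4 ∧ l 4 ≤ r 0 := (h 0 4 (by decide)).mp (by simp [graphP])
  have e15 : l 1 ≤ r 5 ∧ l 5 ≤ r 1 := (h 1 5 (by decide)).mp (by simp [graphP])
  have e26 : l 2 ≤ r 6 ∧ l 6 ≤ r 2 := (h 2 6 (by decide)).mp (by simp [graphP])
  have e47 : l 4 ≤ r 7 ∧ l 7 ≤ r 4 := (h 4 7 (by decide)).mp (by simp [graphP])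
  -- non-edges
  have n12 : ¬ (l 1 ≤ r 2 ∧ l 2 ≤ r 1) := fun hc => (by simp [graphP] : ¬ graphP.Adj 1 2)
    ((h 1 2 (by decide)).mpr hc)
  have n05 : ¬ (l 0 ≤ r 5 ∧ l 5 ≤ r 0) := fun hc => (by simp [graphP] : ¬ graphP.Adj 0 5)
    ((h 0 5 (by decide)).mpr hc)
  have n06 : ¬ (l 0 ≤ r 6 ∧ l 6 ≤ r 0) := fun hc => (by simp [graphP] : ¬ graphP.Adj 0 6)
    ((h 0 6 (by decide)).mpr hc)
  have n14 : ¬ (l 1 ≤ r 4 ∧ l 4 ≤ r 1) := fun hc => (by simp [graphP] : ¬ graphP.Adj 1 4)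
    ((h 1 4 (by decide)).mpr hc)
  have n24 : ¬ (l 2 ≤ r 4 ∧ l 4 ≤ r 2) := fun hc => (by simp [graphP] : ¬ graphP.Adj 2 4)
    ((h 2 4 (by decide)).mpr hc)
  have n07 : ¬ (l 0 ≤ r 7 ∧ l 7 ≤ r 0) := fun hc => (by simp [graphP] : ¬ graphP.Adj 0 7)
    ((h 0 7 (by decide)).mpr hc)
  obtain ⟨e01a, e01b⟩ := e01
  obtain ⟨e02a, e02b⟩ := e02
  obtain ⟨e04a, e04b⟩ := e04
  obtain ⟨e15a, e15b⟩ := e15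
  obtain ⟨e26a, e26b⟩ := e26
  obtain ⟨e47a, e47b⟩ := e47
  rw [not_and_or, not_le, not_le] at n12 n05 n06 n14 n24 n07
  rcases n12 with h12 | h12 <;> rcases n05 with h05 | h05 <;> rcases n06 with h06 | h06 <;>
    rcases n14 with h14 | h14 <;> rcases n24 with h24 | h24 <;> rcases n07 with h07 | h07 <;>
    linarith
end

section
/- For every integer n ≥ 3, the even cycle C₂ₙ, viewed as a bigraph with parts X = {x₀, …, x_{n−1}} and Y = {y₀, …, y_{n−1}} and bipartite relation E given by E xᵢ yⱼ ↔ (j = i ∨ j = i + 1 mod n), admits no signed interval representation; i.e., there are no functions l, r : X ⊕ Y → ℝ with E x y ↔ (l x ≤ r y ∧ l y ≤ r x) for all x ∈ X, y ∈ Y. Hence C₂ₙ (n ≥ 3) is a forbidden induced subgraph for signed interval bigraphs. -/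
/-- The even cycle `C₂ₙ` viewed as a bigraph with parts `X = Fin n` and `Y = Fin n`:
`xᵢ` is related to `yⱼ` iff `j = i` or `j = i + 1 (mod n)`. -/
def cycleBigraph (n : ℕ) (x y : Fin n) : Prop :=
  (y : ℕ) = (x : ℕ) ∨ (y : ℕ) = ((x : ℕ) + 1) % n

open scoped Fin.CommRing

/-- The walk on pairs used in the odd-cycle (Ferrers) argument:
`(i,j) ↦ (j, i+1)`. -/
def SIWalk (m : ℕ) (s : Fin (m + 3)) : ℕ → Fin (m + 3) × Fin (m + 3)
  | 0 => (0, s)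
  | k + 1 => ((SIWalk m s k).2, (SIWalk m s k).1 + 1)

lemma SIWalk_formula (m : ℕ) (s : Fin (m + 3)) (k : ℕ) :
    SIWalk m s (2 * k) = ((k : Fin (m + 3)), s + (k : Fin (m + 3))) ∧
    SIWalk m s (2 * k + 1) = (s + (k : Fin (m + 3)), (k : Fin (m + 3)) + 1) := by
  induction k with
  | zero => simp [SIWalk]
  | succ k ih =>
    have h2 : 2 * (k + 1) = (2 * k + 1) + 1 := by ring
    have hcast : ((k + 1 : ℕ) : Fin (m + 3)) = (k : Fin (m + 3)) + 1 := by push_cast; ring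
    constructor
    · rw [h2, SIWalk, ih.2, hcast]
      simp [add_comm, add_left_comm, add_assoc]
    · rw [show 2 * (k + 1) + 1 = ((2 * k + 1) + 1) + 1 by ring, SIWalk, SIWalk, ih.2, hcast]
      simp [add_comm, add_left_comm, add_assoc]

section

variable {m : ℕ} (l r : Fin (m + 3) ⊕ Fin (m + 3) → ℝ)

/-- The "color" of a non-edge `(i, j)` in a putative signed interval representation. -/
def SIC (i j : Fin (m + 3)) : Prop := r (Sum.inr j) < l (Sum.inl i)

variable
  (hedge : ∀ x y : Fin (m + 3), y = x ∨ y = x + 1 →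
      l (Sum.inl x) ≤ r (Sum.inr y) ∧ l (Sum.inr y) ≤ r (Sum.inl x))
  (hnon : ∀ x y : Fin (m + 3), y ≠ x → y ≠ x + 1 →
      r (Sum.inr y) < l (Sum.inl x) ∨ r (Sum.inl x) < l (Sum.inr y))

include hedge hnon in
/-- The conflict lemma for the step `(i,j) ↦ (j, i+1)`. -/
lemma SIC_step (i j : Fin (m + 3)) (h0 : j ≠ i) (h1 : j ≠ i + 1) :
    SIC l r i j ↔ ¬ SIC l r j (i + 1) := by
  have e1 := hedge i (i + 1) (Or.inr rfl)
  have e2 := hedge j j (Or.inl rfl)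
  have n1 := hnon i j h0 h1
  have n2 := hnon j (i + 1) (fun h => h1 h.symm)
      (fun h => h0 (by exact (add_left_injective 1 h).symm))
  unfold SIC at *
  constructor
  · intro hC hC'
    linarith [e1.1, e2.1]
  · intro hC'
    rcases n1 with h | h
    · exact h
    · rcases n2 with h' | h'
      · exact absurd h' hC'
      · linarith [e1.2, e2.2]

include hedge hnon in
/-- The conflict lemma for the swap `(i,j) ↦ (j, i)`. -/
lemma SIC_swap (i j : Fin (m + 3)) (h0 : j ≠ i) (h1 : j ≠ i + 1) (h2 : i ≠ j + 1) :
    SIC l r i j ↔ ¬ SIC l r j i := by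
  have e1 := hedge i i (Or.inl rfl)
  have e2 := hedge j j (Or.inl rfl)
  have n1 := hnon i j h0 h1
  have n2 := hnon j i (fun h => h0 h.symm) h2
  unfold SIC at *
  constructor
  · intro hC hC'
    linarith [e1.1, e2.1]
  · intro hC'
    rcases n1 with h | h
    · exact h
    · rcases n2 with h' | h'
      · exact absurd h' hC'
      · linarith [e1.2, e2.2]

include hedge hnon in
/-- Alternation of the color along the walk. -/
lemma SIC_alt (s : Fin (m + 3)) (hs0 : s ≠ 0) (hs1 : s ≠ 1) (k : ℕ) :
    SIC l r (SIWalk m s k).1 (SIWalk m s k).2 ↔ (Even k ↔ SIC l r 0 s) := by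
  have hne : ∀ k : ℕ, (SIWalk m s k).2 ≠ (SIWalk m s k).1 ∧
      (SIWalk m s k).2 ≠ (SIWalk m s k).1 + 1 := by
    intro k
    rcases Nat.even_or_odd k with ⟨j, hj⟩ | ⟨j, hj⟩
    · rw [hj, show j + j = 2 * j by ring, (SIWalk_formula m s j).1]
      dsimp only
      refine ⟨fun h => hs0 ?_, fun h => hs1 ?_⟩
      · have h' : s + (j : Fin (m + 3)) = 0 + (j : Fin (m + 3)) := by
          rw [h, zero_add]
        exact add_right_cancel h'
      · have h' : s + (j : Fin (m + 3)) = 1 + (j : Fin (m + 3)) := by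
          rw [h]; ring
        exact add_right_cancel h'
    · rw [hj, (SIWalk_formula m s j).2]
      dsimp only
      refine ⟨fun h => hs1 ?_, fun h => hs0 ?_⟩
      · have h' : (1 : Fin (m + 3)) + (j : Fin (m + 3)) = s + (j : Fin (m + 3)) := by
          rw [← h]; ring
        exact (add_right_cancel h').symm
      · have h'' : (j : Fin (m + 3)) = s + (j : Fin (m + 3)) := add_right_cancel h
        have h' : (0 : Fin (m + 3)) + (j : Fin (m + 3)) = s + (j : Fin (m + 3)) := by
          rw [zero_add, ← h'']
        exact (add_right_cancel h').symm
  induction k with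
  | zero =>
    simp [SIWalk]
  | succ k ih =>
    have hstep := SIC_step l r hedge hnon (SIWalk m s k).1 (SIWalk m s k).2
      (hne k).1 (hne k).2
    have hw : SIWalk m s (k + 1) = ((SIWalk m s k).2, (SIWalk m s k).1 + 1) := rfl
    rw [hw]
    rw [Nat.even_add_one]
    tauto

end

theorem cycleBigraph_not_signed_interval (n : ℕ) (hn : 3 ≤ n) :
    ¬ ∃ l r : Fin n ⊕ Fin n → ℝ,
        ∀ x y : Fin n, cycleBigraph n x y ↔
          (l (Sum.inl x) ≤ r (Sum.inr y) ∧ l (Sum.inr y) ≤ r (Sum.inl x)) := by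
  obtain ⟨m, rfl⟩ : ∃ m, n = m + 3 := ⟨n - 3, by omega⟩
  rintro ⟨l, r, hrep⟩
  have E_iff : ∀ x y : Fin (m + 3), cycleBigraph (m + 3) x y ↔ (y = x ∨ y = x + 1) := by
    intro x y
    unfold cycleBigraph
    rw [Fin.ext_iff, Fin.ext_iff, Fin.val_add, Fin.val_one]
  have hedge : ∀ x y : Fin (m + 3), y = x ∨ y = x + 1 →
      l (Sum.inl x) ≤ r (Sum.inr y) ∧ l (Sum.inr y) ≤ r (Sum.inl x) := by
    intro x y h
    exact (hrep x y).1 ((E_iff x y).2 h)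
  have hnon : ∀ x y : Fin (m + 3), y ≠ x → y ≠ x + 1 →
      r (Sum.inr y) < l (Sum.inl x) ∨ r (Sum.inl x) < l (Sum.inr y) := by
    intro x y h0 h1
    have hE : ¬ cycleBigraph (m + 3) x y := by
      rw [E_iff]; tauto
    rw [hrep x y] at hE
    push_neg at hE
    by_contra hc
    push_neg at hc
    exact absurd (hE hc.1) (not_lt.mpr hc.2)
  rcases Nat.even_or_odd m with ⟨e, he⟩ | ⟨e, he⟩
  · -- n = 2e + 3 is odd; s = e + 2, closed walk of odd length n
    subst he
    set s : Fin (e + e + 3) := ((e + 2 : ℕ) : Fin (e + e + 3)) with hs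
    have hsv : (s : ℕ) = e + 2 := by
      rw [hs, Fin.val_natCast, Nat.mod_eq_of_lt (by omega)]
    have hs0 : s ≠ 0 := by
      intro h
      have := congrArg Fin.val h
      rw [hsv, Fin.val_zero] at this
      omega
    have hs1 : s ≠ 1 := by
      intro h
      have := congrArg Fin.val h
      rw [hsv, Fin.val_one] at this
      omega
    have hclose : SIWalk (e + e) s (2 * (e + 1) + 1) = (0, s) := by
      rw [(SIWalk_formula (e + e) s (e + 1)).2]
      have h1 : s + ((e + 1 : ℕ) : Fin (e + e + 3)) = 0 := by
        rw [hs]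
        rw [show ((e + 2 : ℕ) : Fin (e + e + 3)) + ((e + 1 : ℕ) : Fin (e + e + 3))
            = ((e + e + 3 : ℕ) : Fin (e + e + 3)) by push_cast; ring]
        exact Fin.natCast_self _
      have h2 : ((e + 1 : ℕ) : Fin (e + e + 3)) + 1 = s := by
        rw [hs]; push_cast; ring
      rw [h1, h2]
    have halt := SIC_alt l r hedge hnon s hs0 hs1 (2 * (e + 1) + 1)
    rw [hclose] at halt
    have hodd : ¬ Even (2 * (e + 1) + 1) := by
      simp [Nat.even_add_one, parity_simps]
    tauto
  · -- n = 2e + 4 is even; s = e + 2; walk of length n plus one swap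
    subst he
    set s : Fin (2 * e + 1 + 3) := ((e + 2 : ℕ) : Fin (2 * e + 1 + 3)) with hs
    have hsv : (s : ℕ) = e + 2 := by
      rw [hs, Fin.val_natCast, Nat.mod_eq_of_lt (by omega)]
    have hs0 : s ≠ 0 := by
      intro h
      have := congrArg Fin.val h
      rw [hsv, Fin.val_zero] at this
      omega
    have hs1 : s ≠ 1 := by
      intro h
      have := congrArg Fin.val h
      rw [hsv, Fin.val_one] at this
      omega
    have hclose : SIWalk (2 * e + 1) s (2 * (e + 2)) = (s, 0) := by
      rw [(SIWalk_formula (2 * e + 1) s (e + 2)).1]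
      have h1 : s + ((e + 2 : ℕ) : Fin (2 * e + 1 + 3)) = 0 := by
        rw [hs]
        rw [show ((e + 2 : ℕ) : Fin (2 * e + 1 + 3)) + ((e + 2 : ℕ) : Fin (2 * e + 1 + 3))
            = ((2 * e + 1 + 3 : ℕ) : Fin (2 * e + 1 + 3)) by push_cast; ring]
        exact Fin.natCast_self _
      rw [h1, ← hs]
    have halt := SIC_alt l r hedge hnon s hs0 hs1 (2 * (e + 2))
    rw [hclose] at halt
    have heven : Even (2 * (e + 2)) := ⟨e + 2, by ring⟩
    have hns1 : (0 : Fin (2 * e + 1 + 3)) ≠ s + 1 := by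
      intro h
      have := congrArg Fin.val h
      rw [Fin.val_zero, Fin.val_add, hsv, Fin.val_one,
        Nat.mod_eq_of_lt (by omega)] at this
      omega
    have hswap := SIC_swap l r hedge hnon 0 s hs0 (by rwa [zero_add]) hns1
    simp only [heven, iff_true] at halt
    tauto
end

section
/- For every integer k ≥ 3, the sun graph Sₖ (trampoline) on 2k vertices — inner vertices w₀, …, w_{k−1} forming a complete graph, outer vertices u₀, …, u_{k−1} forming an independent set, with uᵢ adjacent exactly to wᵢ and w_{i+1 mod k} — admits no signed interval representation; consequently no co-TT graph contains Sₖ as an induced subgraph. -/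
/-- The sun graph `Sₖ` (trampoline) on `2k` vertices. The vertex type is
`Fin k ⊕ Fin k`, where `Sum.inl j` is the inner vertex `wⱼ` and `Sum.inr j` is the
outer vertex `uⱼ`. The inner vertices form a complete graph, the outer vertices form
an independent set, and `uᵢ` is adjacent exactly to `wᵢ` and `w_{i+1 mod k}`. -/
def sunGraph (k : ℕ) : SimpleGraph (Fin k ⊕ Fin k) :=
  SimpleGraph.fromEdgeSet
    {e | (∃ a b : Fin k, a ≠ b ∧ e = s(Sum.inl a, Sum.inl b)) ∨
         (∃ j : Fin k, e = s(Sum.inr j, Sum.inl j)) ∨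
         (∃ j j' : Fin k, (j' : ℕ) = ((j : ℕ) + 1) % k ∧ e = s(Sum.inr j, Sum.inl j'))}

private lemma mod_of_lt_two_mul (k a : ℕ) (_hk : 0 < k) (h : a < 2 * k) :
    a % k = if a < k then a else a - k := by
  split_ifs with h'
  · exact Nat.mod_eq_of_lt h'
  · rw [Nat.mod_eq_sub_mod (by omega)]
    exact Nat.mod_eq_of_lt (by omega)

theorem sunGraph_not_signed_interval (k : ℕ) (hk : 3 ≤ k) :
    ¬ IsSignedIntervalGraph (sunGraph k) := by
  rintro ⟨l, r, h⟩
  have hk0 : 0 < k := by omega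
  have hne : Nonempty (Fin k) := ⟨⟨0, hk0⟩⟩
  obtain ⟨i, hi⟩ := Finite.exists_max fun j : Fin k => l (Sum.inr j)
  have hnk : (i : ℕ) < k := i.isLt
  -- successor and predecessor of i
  let i1 : Fin k := ⟨if (i : ℕ) = k - 1 then 0 else (i : ℕ) + 1, by split <;> omega⟩
  let im1 : Fin k := ⟨if (i : ℕ) = 0 then k - 1 else (i : ℕ) - 1, by split <;> omega⟩
  have hi1v : (i1 : ℕ) = if (i : ℕ) = k - 1 then 0 else (i : ℕ) + 1 := rfl
  have him1v : (im1 : ℕ) = if (i : ℕ) = 0 then k - 1 else (i : ℕ) - 1 := rfl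
  -- adjacency lemmas
  have adj_self : ∀ j : Fin k, (sunGraph k).Adj (Sum.inr j) (Sum.inl j) := by
    intro j
    rw [sunGraph, SimpleGraph.fromEdgeSet_adj]
    exact ⟨Or.inr (Or.inl ⟨j, rfl⟩), by simp⟩
  have adj_succ : ∀ j j' : Fin k, (j' : ℕ) = ((j : ℕ) + 1) % k →
      (sunGraph k).Adj (Sum.inr j) (Sum.inl j') := by
    intro j j' hj
    rw [sunGraph, SimpleGraph.fromEdgeSet_adj]
    exact ⟨Or.inr (Or.inr ⟨j, j', hj, rfl⟩), by simp⟩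
  have nonadj : ∀ x y : Fin k, x ≠ y → (y : ℕ) ≠ ((x : ℕ) + 1) % k →
      ¬ (sunGraph k).Adj (Sum.inr x) (Sum.inl y) := by
    intro x y hxy hc
    rw [sunGraph, SimpleGraph.fromEdgeSet_adj]
    rintro ⟨hmem, -⟩
    simp only [Set.mem_setOf_eq, Sym2.eq_iff, reduceCtorEq, and_false, false_and, and_true,
      or_false, false_or, exists_and_left, Sum.inr.injEq, Sum.inl.injEq] at hmem
    rcases hmem with ⟨a, b, hf⟩ | ⟨j, rfl, h2⟩ | ⟨j, j', hjj, rfl, rfl⟩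
    · exact hf
    · exact hxy h2.symm
    · exact hc hjj
  have hsucc1 : ((i : ℕ)) = ((im1 : ℕ) + 1) % k := by
    rw [him1v, mod_of_lt_two_mul k _ hk0 (by split_ifs <;> omega)]
    split_ifs <;> omega
  have hsucc2 : ((i1 : ℕ)) = ((i : ℕ) + 1) % k := by
    rw [hi1v, mod_of_lt_two_mul k _ hk0 (by omega)]
    split_ifs <;> omega
  have adj1 : (sunGraph k).Adj (Sum.inr im1) (Sum.inl i) := adj_succ _ _ hsucc1
  have adj2 : (sunGraph k).Adj (Sum.inr i) (Sum.inl i1) := adj_succ _ _ hsucc2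
  have nonadj1 : ¬ (sunGraph k).Adj (Sum.inr im1) (Sum.inl i1) := by
    refine nonadj _ _ (Fin.ne_of_val_ne ?_) ?_
    · rw [him1v, hi1v]; split_ifs <;> omega
    · rw [hi1v, him1v, mod_of_lt_two_mul k _ hk0 (by split_ifs <;> omega)]
      split_ifs <;> omega
  have nonadj2 : ¬ (sunGraph k).Adj (Sum.inr i1) (Sum.inl i) := by
    refine nonadj _ _ (Fin.ne_of_val_ne ?_) ?_
    · rw [hi1v]; split_ifs <;> omega
    · rw [hi1v, mod_of_lt_two_mul k _ hk0 (by split_ifs <;> omega)]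
      split_ifs <;> omega
  -- extract the real inequalities
  have e1 := (h _ _ (by simp)).mp adj1
  have e2 := (h _ _ (by simp)).mp (adj_self i1)
  have e3 := (h _ _ (by simp)).mp (adj_self i)
  have e4 := (h _ _ (by simp)).mp adj2
  have max1 := hi im1
  have max2 := hi i1
  have n1 : ¬ (l (Sum.inr im1) ≤ r (Sum.inl i1) ∧ l (Sum.inl i1) ≤ r (Sum.inr im1)) :=
    fun hc => nonadj1 ((h _ _ (by simp)).mpr hc)
  have n2 : ¬ (l (Sum.inr i1) ≤ r (Sum.inl i) ∧ l (Sum.inl i) ≤ r (Sum.inr i1)) :=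
    fun hc => nonadj2 ((h _ _ (by simp)).mpr hc)
  have hb1 : ¬ (l (Sum.inl i1) ≤ r (Sum.inr im1)) :=
    fun hb => n1 ⟨by linarith [e4.1], hb⟩
  have hb2 : ¬ (l (Sum.inl i) ≤ r (Sum.inr i1)) :=
    fun hb => n2 ⟨by linarith [e3.1], hb⟩
  push_neg at hb1 hb2
  linarith [e1.2, e2.2]
end

section
/- For every integer n ≥ 4, the cycle graph Cₙ admits no signed interval representation: there are no functions l, r from the vertices of Cₙ to ℝ such that for all distinct vertices u and v, u is adjacent to v iff l u ≤ r v and l v ≤ r u. Consequently every co-TT graph is chordal (contains no induced cycle of length at least 4). -/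
attribute [local instance] Fin.instCommRing

theorem cycleGraph_not_signed_interval (n : ℕ) (hn : 4 ≤ n) :
    ¬ IsSignedIntervalGraph (SimpleGraph.cycleGraph n) := by
  obtain ⟨k, rfl⟩ : ∃ k, n = k + 4 := ⟨n - 4, by omega⟩
  rintro ⟨l, r, h⟩
  obtain ⟨m, hm⟩ := Finite.exists_max l
  set a := m - 1 with ha
  set b := m + 1 with hb
  have hone : (1 : Fin (k + 4)).val = 1 := rfl
  have h2 : ((2 : Fin (k + 4))).val = 2 := by rw [Fin.val_two]
  have h3v : ((3 : Fin (k + 4))).val = 3 := by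
    rw [show (3 : Fin (k + 4)) = ((3 : ℕ) : Fin (k + 4)) by norm_cast, Fin.val_natCast]
    exact Nat.mod_eq_of_lt (by omega)
  have hne1 : (1 : Fin (k + 4)) ≠ 0 := by
    intro hc; rw [Fin.ext_iff, hone] at hc; simp at hc
  have hne2 : (2 : Fin (k + 4)) ≠ 0 := by
    intro hc; rw [Fin.ext_iff, h2] at hc; simp at hc
  have ham : a ≠ m := fun hc => hne1 (sub_eq_self.mp hc)
  have hbm : b ≠ m := fun hc => hne1 (add_eq_left.mp hc)
  have hab : a ≠ b := by
    intro hc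
    apply hne2
    rw [ha, hb] at hc
    linear_combination -hc
  have hadj_ma : (SimpleGraph.cycleGraph (k + 4)).Adj m a := by
    rw [SimpleGraph.cycleGraph_adj']
    left
    have : m - a = 1 := by rw [ha]; ring
    rw [this, hone]
  have hadj_mb : (SimpleGraph.cycleGraph (k + 4)).Adj m b := by
    rw [SimpleGraph.cycleGraph_adj']
    right
    have : b - m = 1 := by rw [hb]; ring
    rw [this, hone]
  have hnadj : ¬ (SimpleGraph.cycleGraph (k + 4)).Adj a b := by
    rw [SimpleGraph.cycleGraph_adj']
    have hab2 : a - b = -2 := by rw [ha, hb]; ring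
    have hba : b - a = 2 := by rw [ha, hb]; ring
    rintro (hc | hc)
    · have he : a - b = 1 := Fin.ext (hc.trans hone.symm)
      have h30 : (3 : Fin (k + 4)) = 0 := by linear_combination hab2 - he
      rw [Fin.ext_iff, h3v] at h30
      simp at h30
    · have he : b - a = 1 := Fin.ext (hc.trans hone.symm)
      rw [hba, Fin.ext_iff, h2, hone] at he
      omega
  have h1 := (h m a (Ne.symm ham)).mp hadj_ma
  have h2' := (h m b (Ne.symm hbm)).mp hadj_mb
  have h3 := (h a b hab).not.mp hnadj
  push_neg at h3
  rcases le_or_gt (l a) (r b) with hc | hc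
  · exact absurd (h1.1.trans_lt ((h3 hc).trans_le (hm b))) (lt_irrefl _)
  · exact absurd (h2'.1.trans_lt (hc.trans_le (hm a))) (lt_irrefl _)
end
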